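/- arXiv:2011.14967 — 11 statements merged into one kernel-verified Lean document; each statement's English description precedes it below -/
import Mathlib

section
/- Let K be a finite abstract simplicial complex, f : K → ℝ^n a monotone function with sublevel filtration K^u = {σ ∈ K : f(σ) ≼ u}, and V a discrete gradient vector field on K consistent with this filtration. Let C = {f(σ) : σ a critical simplex of V} and let C̄ be the closure of C under componentwise maxima. Fix u ∈ ℝ^n with {c ∈ C̄ : c ≼ u} nonempty and let ū be its greatest element. If K^u \ K^{ū} is nonempty, then it contains two simplices σ, τ such that (σ, τ) ∈ V and σ is a free facet of τ in K^u. -/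
/-- A finite abstract simplicial complex on the vertex set `V`. -/
def IsComplex {V : Type} [DecidableEq V] [Fintype V] (K : Finset (Finset V)) : Prop :=
  (∀ s ∈ K, s.Nonempty) ∧ (∀ v : V, ({v} : Finset V) ∈ K) ∧
    ∀ s ∈ K, ∀ t : Finset V, t ⊆ s → t.Nonempty → t ∈ K

/-- `α` is a facet of `β`: a codimension-one face. -/
def IsFacet {V : Type} [DecidableEq V] (α β : Finset V) : Prop :=
  α ⊆ β ∧ β.card = α.card + 1

/-- A discrete vector field on `K`: pairs `(α, β)` of simplices of `K` with `α`
a facet of `β`, every simplex belonging to at most one pair. -/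
def IsDVF {V : Type} [DecidableEq V] (K : Finset (Finset V))
    (W : Set (Finset V × Finset V)) : Prop :=
  (∀ p ∈ W, p.1 ∈ K ∧ p.2 ∈ K ∧ IsFacet p.1 p.2) ∧
    ∀ p ∈ W, ∀ q ∈ W, p ≠ q → p.1 ≠ q.1 ∧ p.1 ≠ q.2 ∧ p.2 ≠ q.1 ∧ p.2 ≠ q.2

/-- `W` admits a nontrivial closed `V`-path
`α₀, β₀, α₁, β₁, …, β_r, α_{r+1} = α₀` with `r ≥ 1`. -/
def HasClosedPath {V : Type} [DecidableEq V] (W : Set (Finset V × Finset V)) : Prop :=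
  ∃ (r : ℕ) (a b : ℕ → Finset V), 1 ≤ r ∧
    (∀ i ≤ r, (a i, b i) ∈ W ∧ IsFacet (a (i + 1)) (b i) ∧ a (i + 1) ≠ a i) ∧
    a (r + 1) = a 0

/-- A discrete gradient vector field: a discrete vector field with no
nontrivial closed `V`-path. -/
def IsGradient {V : Type} [DecidableEq V] (K : Finset (Finset V))
    (W : Set (Finset V × Finset V)) : Prop :=
  IsDVF K W ∧ ¬ HasClosedPath W

/-- A simplex of `K` is critical for `W` if it belongs to no pair of `W`. -/
def IsCritical {V : Type} [DecidableEq V] (K : Finset (Finset V))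
    (W : Set (Finset V × Finset V)) (σ : Finset V) : Prop :=
  σ ∈ K ∧ ∀ p ∈ W, σ ≠ p.1 ∧ σ ≠ p.2

/-- The set of critical values `C = {f σ : σ critical for W}`. -/
def CritVals {n : ℕ} {V : Type} [DecidableEq V] (K : Finset (Finset V))
    (W : Set (Finset V × Finset V)) (f : Finset V → (Fin n → ℝ)) :
    Set (Fin n → ℝ) :=
  {x | ∃ σ, IsCritical K W σ ∧ f σ = x}

/-- The closure of a set `C ⊆ ℝⁿ` under least upper bounds: all componentwise
maxima (least upper bounds in the componentwise order) of nonempty finite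
subsets of `C`. -/
def LubClosure {n : ℕ} (C : Set (Fin n → ℝ)) : Set (Fin n → ℝ) :=
  {x | ∃ S : Finset (Fin n → ℝ), S.Nonempty ∧ ↑S ⊆ C ∧ IsLUB (↑S : Set (Fin n → ℝ)) x}

/-- The sublevel set `K^u = {σ ∈ K : f σ ≼ u}`. -/
def SubLvl {n : ℕ} {V : Type} [DecidableEq V] (K : Finset (Finset V))
    (f : Finset V → (Fin n → ℝ)) (u : Fin n → ℝ) : Set (Finset V) :=
  {σ | σ ∈ K ∧ f σ ≤ u}

/-- let `W` be a discrete gradient vector field on `K` consistent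
with the sublevel filtration of a monotone `f`, `C̄` the closure of the set of
critical values under componentwise maxima, and `ū` the greatest element of
`{c ∈ C̄ : c ≼ u}`. If `K^u \ K^ū` is nonempty then it contains simplices
`σ, τ` with `(σ, τ) ∈ W` and `σ` a free facet of `τ` in `K^u`. -/
theorem stmt_3 {n : ℕ} (hn : 0 < n) {V : Type} [DecidableEq V] [Fintype V]
    (K : Finset (Finset V)) (hK : IsComplex K)
    (f : Finset V → (Fin n → ℝ))
    (hmono : ∀ α ∈ K, ∀ β ∈ K, α ⊆ β → f α ≤ f β)
    (W : Set (Finset V × Finset V)) (hW : IsGradient K W)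
    (hcons : ∀ p ∈ W, f p.1 = f p.2)
    (u ubar : Fin n → ℝ)
    (hubar : IsGreatest {c | c ∈ LubClosure (CritVals K W f) ∧ c ≤ u} ubar)
    (hne : (SubLvl K f u \ SubLvl K f ubar).Nonempty) :
    ∃ σ τ : Finset V,
      σ ∈ SubLvl K f u \ SubLvl K f ubar ∧ τ ∈ SubLvl K f u \ SubLvl K f ubar ∧
      (σ, τ) ∈ W ∧ IsFacet σ τ ∧
      ∀ β ∈ SubLvl K f u, IsFacet σ β → β = τ := by
  classical
  obtain ⟨⟨hW1, hW2⟩, hacyc⟩ := hW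
  set D := SubLvl K f u \ SubLvl K f ubar with hD
  have hDmem : ∀ σ, σ ∈ D ↔ σ ∈ K ∧ f σ ≤ u ∧ ¬ f σ ≤ ubar := by
    intro σ
    simp only [hD, Set.mem_diff, SubLvl, Set.mem_setOf_eq]
    tauto
  -- every simplex in D belongs to some pair of W
  have hA : ∀ σ ∈ D, ∃ p ∈ W, σ = p.1 ∨ σ = p.2 := by
    intro σ hσ
    by_contra hc
    push_neg at hc
    obtain ⟨hσK, hσu, hσub⟩ := (hDmem σ).1 hσ
    have hcrit : IsCritical K W σ := ⟨hσK, fun p hp => hc p hp⟩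
    have hCv : f σ ∈ CritVals K W f := ⟨σ, hcrit, rfl⟩
    have hLub : f σ ∈ LubClosure (CritVals K W f) := by
      refine ⟨{f σ}, Finset.singleton_nonempty _, ?_, ?_⟩
      · intro x hx
        simp only [Finset.coe_singleton, Set.mem_singleton_iff] at hx
        exact hx ▸ hCv
      · simp only [Finset.coe_singleton]
        exact isLUB_singleton
    exact hσub (hubar.2 ⟨hLub, hσu⟩)
  -- pairs map D to D
  have hB : ∀ p ∈ W, (p.1 ∈ D ↔ p.2 ∈ D) := by
    intro p hp
    have h1 := (hW1 p hp).1
    have h2 := (hW1 p hp).2.1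
    have hf := hcons p hp
    rw [hDmem, hDmem, hf]
    tauto
  -- the set of top-dimensions of pairs inside D
  set M : Set ℕ := {m | ∃ p, p ∈ W ∧ p.1 ∈ D ∧ p.2.card = m} with hM
  have hMne : M.Nonempty := by
    obtain ⟨σ, hσ⟩ := hne
    obtain ⟨p, hp, hor⟩ := hA σ hσ
    have hp1 : p.1 ∈ D := by
      rcases hor with h | h
      · exact h ▸ hσ
      · exact (hB p hp).2 (h ▸ hσ)
    exact ⟨p.2.card, p, hp, hp1, rfl⟩
  have hMbdd : BddAbove M := by
    refine ⟨Fintype.card V, ?_⟩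
    rintro m ⟨p, hp, -, rfl⟩
    exact Finset.card_le_univ p.2
  set d : ℕ := sSup M with hd
  have hdM : d ∈ M := Nat.sSup_mem hMne hMbdd
  have hdmax : ∀ m ∈ M, m ≤ d := fun m hm => le_csSup hMbdd hm
  set Pred : Finset V × Finset V → Prop :=
    fun p => p ∈ W ∧ p.1 ∈ D ∧ p.2.card = d with hPred
  -- cofacets in K^u of lower members of pairs in D are in D
  have hcof : ∀ p, Pred p → ∀ β ∈ SubLvl K f u, IsFacet p.1 β → β ∈ D := by
    rintro p ⟨hpW, hp1, -⟩ β ⟨hβK, hβu⟩ ⟨hsub, -⟩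
    obtain ⟨hp1K, -, hp1ub⟩ := (hDmem p.1).1 hp1
    have hle : f p.1 ≤ f β := hmono p.1 hp1K β hβK hsub
    exact (hDmem β).2 ⟨hβK, hβu, fun h => hp1ub (hle.trans h)⟩
  -- key claim: some maximal-dimension pair has a unique cofacet in K^u
  have key : ∃ p, Pred p ∧ ∀ β ∈ SubLvl K f u, IsFacet p.1 β → β = p.2 := by
    by_contra hk
    push_neg at hk
    -- every maximal pair admits a predecessor pair
    have hstep : ∀ p : {p // Pred p}, ∃ q : {p // Pred p},
        IsFacet p.1.1 q.1.2 ∧ q.1.2 ≠ p.1.2 ∧ p.1.1 ≠ q.1.1 := by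
      rintro ⟨p, hp⟩
      obtain ⟨β, hβu, hβf, hβne⟩ := hk p hp
      obtain ⟨hpW, hp1, hp2c⟩ := hp
      have hβD : β ∈ D := hcof p ⟨hpW, hp1, hp2c⟩ β hβu hβf
      obtain ⟨q, hqW, hor⟩ := hA β hβD
      have hp12 : p.2.card = p.1.card + 1 := (hW1 p hpW).2.2.2
      rcases hor with h | h
      · -- β is a lower member: its pair has dimension d+1, contradiction
        exfalso
        have hq1D : q.1 ∈ D := h ▸ hβD
        have hq2 : q.2.card = q.1.card + 1 := (hW1 q hqW).2.2.2
        have : q.2.card ∈ M := ⟨q, hqW, hq1D, rfl⟩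
        have hle := hdmax _ this
        have e1 : q.1.card = β.card := by rw [h]
        have e2 := hβf.2
        omega
      · -- β is an upper member: its pair is also maximal
        have hq2D : q.2 ∈ D := h ▸ hβD
        have hq1D : q.1 ∈ D := (hB q hqW).2 hq2D
        have hq2c : q.2.card = d := by
          have e1 : q.2.card = β.card := by rw [h]
          have e2 := hβf.2
          omega
        have hqne : p ≠ q := by
          intro hpq
          exact hβne (h ▸ (hpq ▸ rfl))
        have h11 : p.1 ≠ q.1 := (hW2 p hpW q hqW hqne).1
        exact ⟨⟨q, hqW, hq1D, hq2c⟩, h ▸ hβf, h ▸ hβne, h11⟩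
    choose g hg1 hg2 hg3 using hstep
    obtain ⟨p0pair, hp0⟩ := hdM
    have hp0' : Pred p0pair := hp0
    set p0 : {p // Pred p} := ⟨p0pair, hp0'⟩ with hp0def
    have hfin : Finite {p // Pred p} := Subtype.finite
    obtain ⟨i, j, hij, hgij⟩ :=
      Finite.exists_ne_map_eq_of_infinite (fun k : ℕ => g^[k] p0)
    -- wlog i < j
    obtain ⟨i, j, hij, hgij⟩ : ∃ i j : ℕ, i < j ∧ g^[i] p0 = g^[j] p0 := by
      rcases hij.lt_or_gt with h | h
      · exact ⟨i, j, h, hgij⟩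
      · exact ⟨j, i, h, hgij.symm⟩
    set m : ℕ := j - i with hm
    set q0 : {p // Pred p} := g^[i] p0 with hq0def
    have hcyc : g^[m] q0 = q0 := by
      rw [hq0def, ← Function.iterate_add_apply, hm]
      rw [Nat.sub_add_cancel hij.le]
      exact hgij.symm
    have hm1 : 1 ≤ m := by omega
    have hm2 : 2 ≤ m := by
      by_contra h
      have hm1' : m = 1 := by omega
      rw [hm1', Function.iterate_one] at hcyc
      exact (hg2 q0) (congrArg (fun x => x.1.2) hcyc)
    -- build a closed V-path
    refine hacyc ⟨m - 1, fun k => (g^[m - k] q0).1.1, fun k => (g^[m - k] q0).1.2,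
      by omega, ?_, ?_⟩
    · intro k hk
      have harith : m - k = (m - (k + 1)) + 1 := by omega
      have hit : g^[m - k] q0 = g (g^[m - (k + 1)] q0) := by
        rw [harith, Function.iterate_succ_apply']
      refine ⟨?_, ?_, ?_⟩
      · show ((g^[m - k] q0).1.1, (g^[m - k] q0).1.2) ∈ W
        have := (g^[m - k] q0).2.1
        simpa using this
      · show IsFacet (g^[m - (k + 1)] q0).1.1 (g^[m - k] q0).1.2
        rw [hit]
        exact hg1 (g^[m - (k + 1)] q0)
      · show (g^[m - (k + 1)] q0).1.1 ≠ (g^[m - k] q0).1.1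
        rw [hit]
        exact hg3 (g^[m - (k + 1)] q0)
    · show (g^[m - (m - 1 + 1)] q0).1.1 = (g^[m - 0] q0).1.1
      have h1 : m - (m - 1 + 1) = 0 := by omega
      have h2 : m - 0 = m := by omega
      rw [h1, h2, Function.iterate_zero_apply, hcyc]
  obtain ⟨p, hp, huniq⟩ := key
  obtain ⟨hpW, hp1D, -⟩ := hp
  have hp2D : p.2 ∈ D := (hB p hpW).1 hp1D
  exact ⟨p.1, p.2, hp1D, hp2D, by rw [Prod.mk.eta]; exact hpW,
    (hW1 p hpW).2.2, huniq⟩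
end

section
/- Let K be a finite abstract simplicial complex, f : K → ℝ^n a monotone function with sublevel filtration K^u = {σ ∈ K : f(σ) ≼ u}, and V a discrete gradient vector field on K consistent with this filtration; let C be the set of critical values of V and C̄ its closure under componentwise maxima. Then for every u ∈ ℝ^n with {c ∈ C̄ : c ≼ u} nonempty (with greatest element ū), there exist r ≥ 0 and a chain of subcomplexes K^u = K₀ ⊇ K₁ ⊇ … ⊇ K_r = K^{ū} such that for each i < r, K_i \ K_{i+1} = {σ_i, τ_i} where (σ_i, τ_i) ∈ V and σ_i is a free facet of τ_i in K_i; i.e., K^u collapses onto K^{ū} by elementary collapses along pairs of V (so the inclusion K^{ū} ↪ K^u induces isomorphisms on all homology groups). -/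
/-!
A simplex of `K^u` outside `K^ū` cannot be critical: its value would lie in `C̄` below `u`, hence
below `ū`. So `W` matches the difference `D = K^u \ K^ū` with itself (pairs do not leave `D`
because `f` is constant on them). Among the pairs inside `D`, look at those whose upper simplex
has maximal dimension. If none of their lower simplices were free in `D`, each such pair would be
preceded on a `V`-path by another one, and finiteness would close the path up. A free pair is also
free in `K^ū ∪ D`, since by monotonicity no simplex of `K^ū` has a face in `D`; removing it is an
elementary collapse, and induction on `|D|` finishes.
-/

section Collapse

variable {V : Type} [DecidableEq V]

def IsElemCollapse (W : Set (Finset V × Finset V)) (A B : Set (Finset V)) : Prop :=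
  B ⊆ A ∧ ∃ σ τ : Finset V, (σ, τ) ∈ W ∧ A \ B = {σ, τ} ∧ IsFacet σ τ ∧
    ∀ β ∈ A, IsFacet σ β → β = τ

def CollapsesTo (W : Set (Finset V × Finset V)) (A B : Set (Finset V)) : Prop :=
  ∃ (r : ℕ) (Ks : ℕ → Set (Finset V)), Ks 0 = A ∧ Ks r = B ∧
    ∀ i < r, IsElemCollapse W (Ks i) (Ks (i + 1))

variable {W : Set (Finset V × Finset V)}

theorem CollapsesTo.refl (W : Set (Finset V × Finset V)) (A : Set (Finset V)) :
    CollapsesTo W A A :=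
  ⟨0, fun _ => A, rfl, rfl, fun i hi => absurd hi (Nat.not_lt_zero i)⟩

theorem CollapsesTo.head {A B C : Set (Finset V)} (hAB : IsElemCollapse W A B)
    (hBC : CollapsesTo W B C) : CollapsesTo W A C := by
  obtain ⟨r, Ks, h0, hr, hKs⟩ := hBC
  refine ⟨r + 1, fun | 0 => A | i + 1 => Ks i, rfl, hr, fun i hi => ?_⟩
  cases i with
  | zero => show IsElemCollapse W A (Ks 0); rwa [h0]
  | succ i => exact hKs i (by omega)

def IsMatched (W : Set (Finset V × Finset V)) (D : Finset (Finset V)) : Prop :=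
  ∀ σ ∈ D, ∃ p ∈ W, p.1 ∈ D ∧ p.2 ∈ D ∧ (σ = p.1 ∨ σ = p.2)

variable {K : Finset (Finset V)}

theorem IsMatched.sdiff_pair {D : Finset (Finset V)} (hW : IsDVF K W) (hD : IsMatched W D)
    {p : Finset V × Finset V} (hp : p ∈ W) : IsMatched W (D \ {p.1, p.2}) := by
  intro σ hσ
  simp only [Finset.mem_sdiff, Finset.mem_insert, Finset.mem_singleton, not_or] at hσ
  obtain ⟨hσD, hσp1, hσp2⟩ := hσ
  obtain ⟨q, hq, hq1, hq2, hσq⟩ := hD σ hσD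
  have hqp : q ≠ p := by
    rintro rfl
    rcases hσq with h | h <;> contradiction
  obtain ⟨h11, h12, h21, h22⟩ := hW.2 q hq p hp hqp
  refine ⟨q, hq, ?_, ?_, hσq⟩ <;> simp [*]

/-- Read backwards, a cycle of predecessors is a closed `V`-path: `q` precedes `p` on a `V`-path
when `p.1` is a facet of `q.2` other than `q.1`. -/
theorem hasClosedPath_of_forall_exists_pred (S : Finset (Finset V × Finset V))
    (hSW : ∀ p ∈ S, p ∈ W) (hS : S.Nonempty)
    (hpred : ∀ p ∈ S, ∃ q ∈ S, IsFacet p.1 q.2 ∧ p.1 ≠ q.1) : HasClosedPath W := by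
  obtain ⟨p₀, hp₀⟩ := hS
  choose! pred hpredS hpred using hpred
  set c : ℕ → Finset V × Finset V := fun k => pred^[k] p₀
  have hc_succ : ∀ k, c (k + 1) = pred (c k) := fun k => Function.iterate_succ_apply' pred k p₀
  have hcS : ∀ k, c k ∈ S := by
    intro k
    induction k with
    | zero => exact hp₀
    | succ k ih => exact hc_succ k ▸ hpredS _ ih
  obtain ⟨i, j, hij, hcij⟩ := S.finite_toSet.exists_lt_map_eq_of_forall_mem hcS
  have hij' : i + 1 < j := by
    by_contra h
    obtain rfl : j = i + 1 := by omega
    exact (hpred _ (hcS i)).2 (by rw [← hc_succ, ← hcij])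
  refine ⟨j - i - 1, fun t => (c (j - t)).1, fun t => (c (j - t)).2, by omega, fun t ht => ?_, ?_⟩
  · have hstep : c (j - t) = pred (c (j - (t + 1))) := by
      rw [← hc_succ]; congr 1; omega
    dsimp only
    rw [hstep]
    exact ⟨hSW _ (hpredS _ (hcS _)), (hpred _ (hcS _)).1, (hpred _ (hcS _)).2⟩
  · simp only [Nat.sub_zero, show j - (j - i - 1 + 1) = i by omega, hcij]

theorem IsMatched.exists_free {D : Finset (Finset V)} (hW : IsGradient K W)
    (hD : IsMatched W D) (hne : D.Nonempty) :
    ∃ p ∈ W, p.1 ∈ D ∧ p.2 ∈ D ∧ ∀ β ∈ D, IsFacet p.1 β → β = p.2 := by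
  classical
  set T := (D ×ˢ D).filter (· ∈ W)
  have hT : ∀ p, p ∈ T ↔ p ∈ W ∧ p.1 ∈ D ∧ p.2 ∈ D := by
    simp [T, Finset.mem_filter, Finset.mem_product, and_comm]
  obtain ⟨σ, hσ⟩ := hne
  obtain ⟨p₀, hp₀, hp₀1, hp₀2, -⟩ := hD σ hσ
  obtain ⟨pmax, hpmax, hmax⟩ :=
    T.exists_max_image (fun p => p.2.card) ⟨p₀, (hT p₀).2 ⟨hp₀, hp₀1, hp₀2⟩⟩
  set T' := T.filter (fun p => p.2.card = pmax.2.card)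
  have hT' : ∀ p, p ∈ T' ↔ p ∈ T ∧ p.2.card = pmax.2.card := fun p => Finset.mem_filter
  by_contra hfree
  push Not at hfree
  refine hW.2 (hasClosedPath_of_forall_exists_pred T' (fun p hp => ((hT p).1 ((hT' p).1 hp).1).1)
    ⟨pmax, (hT' _).2 ⟨hpmax, rfl⟩⟩ fun p hp => ?_)
  obtain ⟨hpT, hpd⟩ := (hT' p).1 hp
  obtain ⟨hpW, hp1, hp2⟩ := (hT p).1 hpT
  obtain ⟨β, hβD, hpβ, hβp⟩ := hfree p hpW hp1 hp2
  obtain ⟨q, hqW, hq1, hq2, hβq⟩ := hD β hβD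
  have hqT := (hT q).2 ⟨hqW, hq1, hq2⟩
  have hpcard := (hW.1.1 p hpW).2.2.2
  have hqcard := (hW.1.1 q hqW).2.2.2
  -- `β` cannot be a lower simplex: its partner would exceed the maximal dimension
  obtain rfl : β = q.2 := hβq.resolve_left fun h => by
    have := hmax q hqT
    have := hpβ.2
    subst h
    omega
  refine ⟨q, (hT' q).2 ⟨hqT, by have := hpβ.2; omega⟩, hpβ, fun h => hβp ?_⟩
  by_cases hpq : p = q
  · rw [hpq]
  · exact absurd h (hW.1.2 p hpW q hqW hpq).1

theorem isElemCollapse_union_sdiff_pair (hW : IsDVF K W) {B : Set (Finset V)}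
    {D : Finset (Finset V)} (hBD : Disjoint B ↑D) (hB : ∀ σ ∈ D, ∀ β ∈ B, ¬IsFacet σ β)
    {p : Finset V × Finset V} (hp : p ∈ W) (hp1 : p.1 ∈ D) (hp2 : p.2 ∈ D)
    (hfree : ∀ β ∈ D, IsFacet p.1 β → β = p.2) :
    IsElemCollapse W (B ∪ ↑D) (B ∪ ↑(D \ {p.1, p.2})) := by
  refine ⟨Set.union_subset_union_right _ (by simp), p.1, p.2, hp, ?_, (hW.1 p hp).2.2,
    fun β hβ hpβ => hβ.elim (fun hβB => absurd hpβ (hB _ hp1 _ hβB)) fun hβD => hfree β hβD hpβ⟩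
  have hp1B : p.1 ∉ B := fun h => Set.disjoint_left.1 hBD h hp1
  have hp2B : p.2 ∉ B := fun h => Set.disjoint_left.1 hBD h hp2
  ext x
  by_cases hx1 : x = p.1
  · subst hx1; simp [hp1B, hp1]
  by_cases hx2 : x = p.2
  · subst hx2; simp [hp2B, hp2]
  simp only [Set.mem_sdiff, Set.mem_union, Finset.mem_coe, Finset.mem_sdiff, Finset.mem_insert,
    Finset.mem_singleton, Set.mem_insert_iff, Set.mem_singleton_iff, hx1, hx2]
  tauto

theorem collapsesTo_union_of_isMatched (hW : IsGradient K W) {B : Set (Finset V)}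
    (D : Finset (Finset V)) (hBD : Disjoint B ↑D) (hB : ∀ σ ∈ D, ∀ β ∈ B, ¬IsFacet σ β)
    (hD : IsMatched W D) : CollapsesTo W (B ∪ ↑D) B := by
  induction D using Finset.strongInduction with
  | H D ih =>
  rcases D.eq_empty_or_nonempty with rfl | hne
  · simpa using CollapsesTo.refl W B
  obtain ⟨p, hp, hp1, hp2, hfree⟩ := hD.exists_free hW hne
  have hsub : D \ {p.1, p.2} ⊂ D :=
    Finset.sdiff_ssubset (Finset.insert_subset hp1 (Finset.singleton_subset_iff.2 hp2))
      (Finset.insert_nonempty _ _)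
  exact CollapsesTo.head (isElemCollapse_union_sdiff_pair hW.1 hBD hB hp hp1 hp2 hfree)
    (ih _ hsub (hBD.mono_right (by simp)) (fun σ hσ => hB σ (Finset.sdiff_subset hσ))
      (hD.sdiff_pair hW.1 hp))

end Collapse

section Sublevel

variable {n : ℕ} {V : Type} {K : Finset (Finset V)}
  {f : Finset V → (Fin n → ℝ)} {u v : Fin n → ℝ}

theorem mem_lubClosure_of_mem {C : Set (Fin n → ℝ)} {x : Fin n → ℝ} (hx : x ∈ C) :
    x ∈ LubClosure C :=
  ⟨{x}, Finset.singleton_nonempty x, by simp [hx], by simp [isLUB_singleton]⟩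

open Classical in
noncomputable def sublevelDiff (K : Finset (Finset V)) (f : Finset V → (Fin n → ℝ)) (u v : Fin n → ℝ) :
    Finset (Finset V) :=
  K.filter fun σ => f σ ≤ u ∧ ¬f σ ≤ v

@[simp]
theorem mem_sublevelDiff {σ : Finset V} :
    σ ∈ sublevelDiff K f u v ↔ σ ∈ K ∧ f σ ≤ u ∧ ¬f σ ≤ v := by
  simp [sublevelDiff]

variable [DecidableEq V]

theorem subLvl_eq_union_sublevelDiff (hvu : v ≤ u) :
    SubLvl K f u = SubLvl K f v ∪ ↑(sublevelDiff K f u v) := by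
  ext σ
  by_cases hv : f σ ≤ v
  · simp [SubLvl, hv, hv.trans hvu]
  · simp [SubLvl, hv]

theorem disjoint_subLvl_sublevelDiff : Disjoint (SubLvl K f v) ↑(sublevelDiff K f u v) :=
  Set.disjoint_left.2 fun _ hσ hσ' => (mem_sublevelDiff.1 hσ').2.2 hσ.2

theorem not_isFacet_of_mem_sublevelDiff (hmono : ∀ α ∈ K, ∀ β ∈ K, α ⊆ β → f α ≤ f β) :
    ∀ σ ∈ sublevelDiff K f u v, ∀ β ∈ SubLvl K f v, ¬IsFacet σ β := by
  intro σ hσ β hβ hσβ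
  obtain ⟨hσK, -, hσv⟩ := mem_sublevelDiff.1 hσ
  exact hσv ((hmono σ hσK β hβ.1 hσβ.1).trans hβ.2)

theorem isMatched_sublevelDiff {W : Set (Finset V × Finset V)} (hW : IsDVF K W)
    (hcons : ∀ p ∈ W, f p.1 = f p.2)
    (hcrit : ∀ σ, IsCritical K W σ → f σ ≤ u → f σ ≤ v) :
    IsMatched W (sublevelDiff K f u v) := by
  intro σ hσ
  obtain ⟨hσK, hσu, hσv⟩ := mem_sublevelDiff.1 hσ
  obtain ⟨p, hp, hσp⟩ : ∃ p ∈ W, σ = p.1 ∨ σ = p.2 := by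
    by_contra h
    push Not at h
    exact hσv (hcrit σ ⟨hσK, h⟩ hσu)
  obtain ⟨hp1K, hp2K, -⟩ := hW.1 p hp
  have hf : f p.1 = f σ ∧ f p.2 = f σ := by
    rcases hσp with rfl | rfl <;> simp [hcons p hp]
  exact ⟨p, hp, by simp [hp1K, hf, hσu, hσv], by simp [hp2K, hf, hσu, hσv], hσp⟩

end Sublevel

theorem stmt_4_general {n : ℕ} {V : Type} [DecidableEq V]
    (K : Finset (Finset V))
    (f : Finset V → (Fin n → ℝ))
    (hmono : ∀ α ∈ K, ∀ β ∈ K, α ⊆ β → f α ≤ f β)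
    (W : Set (Finset V × Finset V)) (hW : IsGradient K W)
    (hcons : ∀ p ∈ W, f p.1 = f p.2)
    (u ubar : Fin n → ℝ)
    (hubar : IsGreatest {c | c ∈ LubClosure (CritVals K W f) ∧ c ≤ u} ubar) :
    ∃ (r : ℕ) (Ks : ℕ → Set (Finset V)),
      Ks 0 = SubLvl K f u ∧ Ks r = SubLvl K f ubar ∧
      ∀ i < r, Ks (i + 1) ⊆ Ks i ∧
        ∃ σ τ : Finset V, (σ, τ) ∈ W ∧
          Ks i \ Ks (i + 1) = {σ, τ} ∧ IsFacet σ τ ∧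
          ∀ β ∈ Ks i, IsFacet σ β → β = τ := by
  have hcrit : ∀ σ, IsCritical K W σ → f σ ≤ u → f σ ≤ ubar := fun σ hσ hσu =>
    hubar.2 ⟨mem_lubClosure_of_mem ⟨σ, hσ, rfl⟩, hσu⟩
  rw [subLvl_eq_union_sublevelDiff hubar.1.2]
  exact collapsesTo_union_of_isMatched hW _ disjoint_subLvl_sublevelDiff
    (not_isFacet_of_mem_sublevelDiff hmono) (isMatched_sublevelDiff hW.1 hcons hcrit)

/-- with `W` a discrete gradient vector field on `K` consistent
with the sublevel filtration of a monotone `f`, `C̄` the closure of the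
critical values under componentwise maxima, and `ū` the greatest element of
`{c ∈ C̄ : c ≼ u}`, the sublevel complex `K^u` collapses onto `K^ū`: there is
a chain `K^u = K₀ ⊇ K₁ ⊇ … ⊇ K_r = K^ū` of elementary collapses along pairs
of `W`. -/
theorem stmt_4 {n : ℕ} (hn : 0 < n) {V : Type} [DecidableEq V] [Fintype V]
    (K : Finset (Finset V)) (hK : IsComplex K)
    (f : Finset V → (Fin n → ℝ))
    (hmono : ∀ α ∈ K, ∀ β ∈ K, α ⊆ β → f α ≤ f β)
    (W : Set (Finset V × Finset V)) (hW : IsGradient K W)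
    (hcons : ∀ p ∈ W, f p.1 = f p.2)
    (u ubar : Fin n → ℝ)
    (hubar : IsGreatest {c | c ∈ LubClosure (CritVals K W f) ∧ c ≤ u} ubar) :
    ∃ (r : ℕ) (Ks : ℕ → Set (Finset V)),
      Ks 0 = SubLvl K f u ∧ Ks r = SubLvl K f ubar ∧
      ∀ i < r, Ks (i + 1) ⊆ Ks i ∧
        ∃ σ τ : Finset V, (σ, τ) ∈ W ∧
          Ks i \ Ks (i + 1) = {σ, τ} ∧ IsFacet σ τ ∧
          ∀ β ∈ Ks i, IsFacet σ β → β = τ :=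
  stmt_4_general K f hmono W hW hcons u ubar hubar
end

section
/- Let K be a finite abstract simplicial complex, f : K → ℝ^n a monotone function with sublevel filtration K^u = {σ ∈ K : f(σ) ≼ u}, and V a discrete gradient vector field on K consistent with this filtration; let C be the set of critical values of V and C̄ its closure under componentwise maxima. Then for every u ∈ ℝ^n such that no element of C̄ satisfies c ≼ u, the subcomplex K^u is empty. -/
/-- with `W` a discrete gradient vector field on `K` consistent
with the sublevel filtration of a monotone `f`, and `C̄` the closure of the
set of critical values under componentwise maxima, if no element of `C̄` is
`≼ u` then the sublevel complex `K^u` is empty. -/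
theorem stmt_5 {n : ℕ} (hn : 0 < n) {V : Type} [DecidableEq V] [Fintype V]
    (K : Finset (Finset V)) (hK : IsComplex K)
    (f : Finset V → (Fin n → ℝ))
    (hmono : ∀ α ∈ K, ∀ β ∈ K, α ⊆ β → f α ≤ f β)
    (W : Set (Finset V × Finset V)) (hW : IsGradient K W)
    (hcons : ∀ p ∈ W, f p.1 = f p.2)
    (u : Fin n → ℝ)
    (hnone : ¬ ∃ c ∈ LubClosure (CritVals K W f), c ≤ u) :
    SubLvl K f u = ∅ := by
  classical
  obtain ⟨hne, hsing, hsub⟩ := hK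
  by_contra hcon
  rw [Set.eq_empty_iff_forall_notMem] at hcon
  push_neg at hcon
  obtain ⟨σ₀, hσ₀K, hσ₀u⟩ := hcon
  set T : Finset (Finset V) := K.filter (fun σ => f σ ≤ u) with hT
  have memT : ∀ σ, σ ∈ T ↔ σ ∈ K ∧ f σ ≤ u := by
    intro σ; simp [hT]
  have hσ₀T : σ₀ ∈ T := (memT σ₀).2 ⟨hσ₀K, hσ₀u⟩
  obtain ⟨μ, hμT, hμmin⟩ := T.exists_min_image Finset.card ⟨σ₀, hσ₀T⟩
  set m := μ.card with hm
  have hm1 : 1 ≤ m := by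
    have := hne μ ((memT μ).1 hμT).1
    exact Finset.card_pos.2 this
  by_cases hcrit : ∃ σ ∈ T, IsCritical K W σ
  · obtain ⟨σ, hσT, hcr⟩ := hcrit
    refine hnone ⟨f σ, ⟨{f σ}, Finset.singleton_nonempty _, ?_, ?_⟩, ((memT σ).1 hσT).2⟩
    · intro x hx
      simp only [Finset.coe_singleton, Set.mem_singleton_iff] at hx
      exact ⟨σ, hcr, hx.symm⟩
    · rw [Finset.coe_singleton]; exact isLUB_singleton
  · push_neg at hcrit
    have step : ∀ σ, σ ∈ T → σ.card = m →
        ∃ β α, (σ, β) ∈ W ∧ IsFacet α β ∧ α ≠ σ ∧ α ∈ T ∧ α.card = m := by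
      intro σ hσT hσm
      have hσK := ((memT σ).1 hσT).1
      have hσu := ((memT σ).1 hσT).2
      have hnc := hcrit σ hσT
      unfold IsCritical at hnc
      push_neg at hnc
      obtain ⟨p, hp, hpe⟩ := hnc hσK
      have hpe' : σ = p.1 ∨ σ = p.2 := by tauto
      obtain ⟨hp1K, hp2K, hp12, hpc⟩ := hW.1.1 p hp
      rcases hpe' with h1 | h2
      · -- σ = p.1, pair upward with β = p.2
        set β := p.2 with hβ
        have hβK : β ∈ K := hp2K
        have hβc : β.card = m + 1 := by rw [hpc, ← h1, hσm]
        have hfβ : f β = f σ := by rw [h1]; exact (hcons p hp).symm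
        have hσβ : σ ⊆ β := by rw [h1]; exact hp12
        obtain ⟨z, hz⟩ := hne σ hσK
        have hzβ : z ∈ β := hσβ hz
        set α := β.erase z with hα
        have hαc : α.card = m := by
          rw [hα, Finset.card_erase_of_mem hzβ, hβc]
          omega
        have hαne : α.Nonempty := Finset.card_pos.1 (by omega)
        have hαK : α ∈ K := hsub β hβK α (Finset.erase_subset _ _) hαne
        have hfα : f α ≤ u := le_trans (hmono α hαK β hβK (Finset.erase_subset _ _))
          (by rw [hfβ]; exact hσu)
        have hss : σ ⊂ β := hσβ.ssubset_of_ne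
          (by intro h; rw [h] at hσm; omega)
        obtain ⟨y, hyβ, hyσ⟩ := Finset.exists_of_ssubset hss
        have hαneσ : α ≠ σ := by
          intro h
          apply hyσ
          rw [← h, hα]
          exact Finset.mem_erase.2 ⟨fun hyz => hyσ (hyz ▸ hz), hyβ⟩
        exact ⟨β, α, by rw [h1]; exact hp, ⟨Finset.erase_subset _ _, by omega⟩,
          hαneσ, (memT α).2 ⟨hαK, hfα⟩, hαc⟩
      · -- σ = p.2 : contradiction with minimality
        exfalso
        have hf1 : f p.1 ≤ u := by rw [hcons p hp, ← h2]; exact hσu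
        have h1T : p.1 ∈ T := (memT _).2 ⟨hp1K, hf1⟩
        have hle : m ≤ p.1.card := hμmin p.1 h1T
        have hc2 : σ.card = p.1.card + 1 := by rw [h2]; exact hpc
        rw [hσm] at hc2
        omega
    choose! βf αf h1 h2 h3 h4 h5 using step
    let a : ℕ → Finset V := fun k => Nat.rec μ (fun _ σ => αf σ) k
    have ha0 : a 0 = μ := rfl
    have haS : ∀ k, a (k + 1) = αf (a k) := fun k => rfl
    have hinv : ∀ k, a k ∈ T ∧ (a k).card = m := by
      intro k
      induction k with
      | zero => exact ⟨hμT, rfl⟩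
      | succ k ih =>
        rw [haS]
        exact ⟨h4 (a k) ih.1 ih.2, h5 (a k) ih.1 ih.2⟩
    have hWk : ∀ k, (a k, βf (a k)) ∈ W ∧ IsFacet (a (k+1)) (βf (a k)) ∧ a (k+1) ≠ a k := by
      intro k
      obtain ⟨hT', hc'⟩ := hinv k
      exact ⟨h1 (a k) hT' hc', by rw [haS]; exact h2 (a k) hT' hc',
        by rw [haS]; exact h3 (a k) hT' hc'⟩
    obtain ⟨i, j, hij, haij⟩ := Finite.exists_ne_map_eq_of_infinite a
    wlog hlt : i < j generalizing i j
    · exact this j i hij.symm haij.symm (by omega)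
    have hj2 : i + 2 ≤ j := by
      rcases Nat.lt_or_ge (i+1) j with h | h
      · omega
      · exfalso
        have : j = i + 1 := by omega
        exact (hWk i).2.2 (by rw [← this, ← haij])
    apply hW.2
    refine ⟨j - i - 1, fun k => a (i + k), fun k => βf (a (i + k)), by omega, ?_, ?_⟩
    · intro k hk
      refine ⟨(hWk (i+k)).1, ?_, ?_⟩
      · show IsFacet (a (i + (k+1))) (βf (a (i+k)))
        rw [show i + (k+1) = (i+k)+1 by ring]; exact (hWk (i+k)).2.1
      · show a (i + (k+1)) ≠ a (i+k)
        rw [show i + (k+1) = (i+k)+1 by ring]; exact (hWk (i+k)).2.2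
    · show a (i + (j - i - 1 + 1)) = a (i + 0)
      rw [show i + (j - i - 1 + 1) = j by omega, Nat.add_zero]
      exact haij.symm
end

section
/- Let L ⊆ ℝ^n be a line with positive slope and let u ∈ ℝ^n. Then the intersection of L with the topological frontier of the positive cone S₊(u) = {v ∈ ℝ^n : u ≼ v} consists of exactly one point. -/
/-- `L ⊆ ℝⁿ` is a line with positive slope: `L = {u₀ + t·m : t ∈ ℝ}` with all
coordinates of the velocity vector `m` positive. -/
def PosLine {n : ℕ} (L : Set (Fin n → ℝ)) : Prop :=
  ∃ u₀ m : Fin n → ℝ, (∀ i, 0 < m i) ∧ L = {x | ∃ t : ℝ, x = u₀ + t • m}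


/-- a line with positive slope meets the topological frontier of
the positive cone `S₊(u) = {v : u ≼ v}` in exactly one point. -/
theorem stmt_6 {n : ℕ} (hn : 0 < n) (L : Set (Fin n → ℝ)) (hL : PosLine L)
    (u : Fin n → ℝ) :
    ∃! p : Fin n → ℝ, p ∈ L ∩ frontier {v : Fin n → ℝ | u ≤ v} := by
  obtain ⟨u₀, m, hm, hLeq⟩ := hL
  have hne : (Finset.univ : Finset (Fin n)).Nonempty :=
    Finset.univ_nonempty_iff.mpr ⟨⟨0, hn⟩⟩
  set S : Set (Fin n → ℝ) := {v : Fin n → ℝ | u ≤ v} with hS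
  have hSclosed : IsClosed S := isClosed_Ici
  set T : ℝ := Finset.univ.sup' hne (fun i => (u i - u₀ i) / m i) with hT
  obtain ⟨i₀, -, hi₀⟩ := Finset.exists_mem_eq_sup' hne (fun i => (u i - u₀ i) / m i)
  have hle : ∀ i, (u i - u₀ i) / m i ≤ T := fun i => hT ▸ Finset.le_sup' (fun i => (u i - u₀ i) / m i) (Finset.mem_univ i)
  set p : Fin n → ℝ := u₀ + T • m with hp
  have hTi₀ : T * m i₀ = u i₀ - u₀ i₀ := by
    rw [hT, hi₀]; exact div_mul_cancel₀ _ (hm i₀).ne'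
  have hpS : p ∈ S := by
    intro i
    have h2 : u i - u₀ i ≤ T * m i := (div_le_iff₀ (hm i)).mp (hle i)
    simp only [hp, Pi.add_apply, Pi.smul_apply, smul_eq_mul]
    linarith
  have hcont : Continuous (fun t : ℝ => u₀ + t • m) :=
    continuous_const.add (continuous_id.smul continuous_const)
  have htend : Filter.Tendsto (fun t : ℝ => u₀ + t • m) (nhdsWithin T (Set.Iio T)) (nhds p) :=
    (hcont.tendsto T).mono_left nhdsWithin_le_nhds
  have hpc : p ∈ closure Sᶜ := by
    apply mem_closure_of_tendsto htend
    filter_upwards [self_mem_nhdsWithin] with t ht hmem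
    have h1 : u i₀ ≤ u₀ i₀ + t * m i₀ := hmem i₀
    have h2 : t * m i₀ < T * m i₀ := mul_lt_mul_of_pos_right ht (hm i₀)
    linarith
  have hpfront : p ∈ frontier S := by
    rw [frontier_eq_closure_inter_closure]
    exact ⟨subset_closure hpS, hpc⟩
  refine ⟨p, ⟨hLeq ▸ ⟨T, rfl⟩, hpfront⟩, ?_⟩
  rintro q ⟨hqL, hqf⟩
  rw [hLeq] at hqL
  obtain ⟨t, rfl⟩ := hqL
  have hqS : u ≤ u₀ + t • m := by
    have := frontier_subset_closure (s := S) hqf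
    rwa [hSclosed.closure_eq] at this
  have hTle : T ≤ t := by
    apply Finset.sup'_le
    intro i _
    have h1 : u i ≤ u₀ i + t * m i := hqS i
    exact (div_le_iff₀ (hm i)).mpr (by linarith)
  have hteq : t = T := by
    by_contra hne'
    have htlt : T < t := lt_of_le_of_ne hTle (Ne.symm hne')
    have hqint : (u₀ + t • m) ∈ interior S := by
      refine mem_interior.mpr ⟨⋂ i, {v : Fin n → ℝ | u i < v i}, ?_, ?_, ?_⟩
      · intro v hv i
        exact le_of_lt (Set.mem_iInter.mp hv i)
      · exact isOpen_iInter_of_finite fun i =>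
          isOpen_lt continuous_const (continuous_apply i)
      · refine Set.mem_iInter.mpr fun i => ?_
        have h2 : u i - u₀ i ≤ T * m i := (div_le_iff₀ (hm i)).mp (hle i)
        have h3 : T * m i < t * m i := mul_lt_mul_of_pos_right htlt (hm i)
        show u i < u₀ i + t * m i
        linarith
    exact hqf.2 hqint
  rw [hteq]
end

section
/- Let L ⊆ ℝ^n be a line with positive slope and let u ∈ ℝ^n. Then the set {v ∈ L : u ≼ v} has a least element p; this point p lies on the topological frontier of S₊(u) = {v ∈ ℝ^n : u ≼ v}; it satisfies u ≼ p, with p = u if and only if u ∈ L; and every point of L not equal to p that is strictly below p in the order of the line is either incomparable to u or less than u. -/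
/-- for a line `L` with positive slope and `u ∈ ℝⁿ`, the set
`{v ∈ L : u ≼ v}` has a least element `p`; `p` lies on the frontier of the
positive cone `S₊(u)`; `u ≼ p`, with `p = u` iff `u ∈ L`; and every point of
`L` strictly below `p` in the order of the line is either incomparable to `u`
or (strictly) less than `u`. -/
theorem stmt_7 {n : ℕ} (hn : 0 < n) (L : Set (Fin n → ℝ)) (hL : PosLine L)
    (u : Fin n → ℝ) :
    ∃ p : Fin n → ℝ,
      IsLeast {v | v ∈ L ∧ u ≤ v} p ∧
      p ∈ frontier {v : Fin n → ℝ | u ≤ v} ∧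
      u ≤ p ∧ (p = u ↔ u ∈ L) ∧
      ∀ q ∈ L, q ≤ p → q ≠ p →
        ((¬ u ≤ q ∧ ¬ q ≤ u) ∨ (q ≤ u ∧ q ≠ u)) := by
  obtain ⟨u₀, m, hm, hLe⟩ := hL
  haveI : Nonempty (Fin n) := ⟨⟨0, hn⟩⟩
  set f : Fin n → ℝ := fun i => (u i - u₀ i) / m i with hf
  set t₀ : ℝ := Finset.univ.sup' Finset.univ_nonempty f with ht₀
  set p : Fin n → ℝ := u₀ + t₀ • m with hp
  have key : ∀ t : ℝ, (u ≤ u₀ + t • m) ↔ t₀ ≤ t := by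
    intro t
    rw [ht₀, Finset.sup'_le_iff]
    constructor
    · intro h i _
      have h2 := h i
      simp only [Pi.add_apply, Pi.smul_apply, smul_eq_mul] at h2
      rw [hf]
      rw [div_le_iff₀ (hm i)]
      linarith
    · intro h i
      have h2 := h i (Finset.mem_univ i)
      rw [hf] at h2
      rw [div_le_iff₀ (hm i)] at h2
      simp only [Pi.add_apply, Pi.smul_apply, smul_eq_mul]
      linarith
  have hup : u ≤ p := (key t₀).2 le_rfl
  obtain ⟨i₀, -, hi₀⟩ := Finset.exists_mem_eq_sup' (Finset.univ_nonempty (α := Fin n)) f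
  have hpi₀ : p i₀ = u i₀ := by
    simp only [hp, Pi.add_apply, Pi.smul_apply, smul_eq_mul]
    rw [ht₀, hi₀]
    simp only [hf]
    rw [div_mul_cancel₀ _ (hm i₀).ne']
    ring
  have hpL : p ∈ L := by rw [hLe]; exact ⟨t₀, rfl⟩
  -- monotonicity of t ↦ u₀ + t • m
  have mono : ∀ s t : ℝ, s ≤ t → u₀ + s • m ≤ u₀ + t • m := by
    intro s t hst i
    simp only [Pi.add_apply, Pi.smul_apply, smul_eq_mul]
    nlinarith [hm i]
  have least : IsLeast {v | v ∈ L ∧ u ≤ v} p := by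
    constructor
    · exact ⟨hpL, hup⟩
    · rintro v ⟨hvL, hv⟩
      rw [hLe] at hvL
      obtain ⟨t, rfl⟩ := hvL
      exact mono t₀ t ((key t).1 hv)
  refine ⟨p, least, ?_, hup, ?_, ?_⟩
  · -- frontier
    rw [frontier_eq_closure_inter_closure]
    constructor
    · exact subset_closure hup
    · have htend : Filter.Tendsto (fun k : ℕ => p - (1 / (k + 1 : ℝ)) • m)
          Filter.atTop (nhds p) := by
        have h1 : Filter.Tendsto (fun k : ℕ => (1 / (k + 1 : ℝ)) • m)
            Filter.atTop (nhds ((0 : ℝ) • m)) :=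
          tendsto_one_div_add_atTop_nhds_zero_nat.smul_const m
        simpa using h1.const_sub p
      refine mem_closure_of_tendsto htend (Filter.Eventually.of_forall ?_)
      intro k
      simp only [Set.mem_compl_iff, Set.mem_setOf_eq, Pi.le_def, not_forall]
      refine ⟨i₀, ?_⟩
      simp only [Pi.sub_apply, Pi.smul_apply, smul_eq_mul, hpi₀]
      push_neg
      have : (0 : ℝ) < 1 / (k + 1 : ℝ) := by positivity
      nlinarith [hm i₀]
  · -- p = u ↔ u ∈ L
    constructor
    · intro h; rw [← h]; exact hpL
    · intro h
      rw [hLe] at h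
      obtain ⟨s, hs⟩ := h
      have hs' : t₀ ≤ s := (key s).1 (le_of_eq hs)
      refine le_antisymm ?_ hup
      rw [hs, hp]
      exact mono t₀ s hs'
  · rintro q hqL hqp hqne
    rw [hLe] at hqL
    obtain ⟨s, rfl⟩ := hqL
    have hst : s < t₀ := by
      have hle : s ≤ t₀ := by
        have := hqp i₀
        simp only [hp, Pi.add_apply, Pi.smul_apply, smul_eq_mul] at this
        nlinarith [hm i₀]
      rcases lt_or_eq_of_le hle with h | h
      · exact h
      · exact absurd (by rw [hp, h]) hqne
    have hnuq : ¬ u ≤ u₀ + s • m := fun h => absurd ((key s).1 h) (not_le.2 hst)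
    by_cases hqu : u₀ + s • m ≤ u
    · right
      refine ⟨hqu, fun h => hnuq (le_of_eq h.symm)⟩
    · left
      exact ⟨hnuq, hqu⟩
end

section
/- Let L ⊆ ℝ^n be a line with positive slope, let u ≼ v in ℝ^n, and let A = A^L_u and B = A^L_v be the unique nonempty subsets of {1,…,n} with push_L(u) ∈ S_A(u) and push_L(v) ∈ S_B(v). Then push_L(u) = push_L(v) if and only if S_A(u) ∩ S_B(v) ≠ ∅. -/
/-- For `∅ ≠ A ⊆ {1,…,n}`, the open face
`S_A(u) = {x : x_i = u_i for i ∈ A, x_j > u_j for j ∉ A}` of the boundary of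
the positive cone of `u`. -/
def SFace {n : ℕ} (A : Finset (Fin n)) (u : Fin n → ℝ) : Set (Fin n → ℝ) :=
  {x | (∀ i ∈ A, x i = u i) ∧ ∀ j ∉ A, u j < x j}

/-- for a line `L` with positive slope and `u ≼ v`, with
`A = A^L_u`, `B = A^L_v` the unique nonempty subsets of `{1,…,n}` such that
`push_L(u) ∈ S_A(u)` and `push_L(v) ∈ S_B(v)`, one has
`push_L(u) = push_L(v)` iff `S_A(u) ∩ S_B(v) ≠ ∅`. -/
theorem stmt_10 {n : ℕ} (hn : 0 < n) (L : Set (Fin n → ℝ)) (hL : PosLine L)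
    (u v pu pv : Fin n → ℝ) (huv : u ≤ v)
    (hpu : IsLeast {x | x ∈ L ∧ u ≤ x} pu)
    (hpv : IsLeast {x | x ∈ L ∧ v ≤ x} pv)
    (A B : Finset (Fin n)) (hA : A.Nonempty) (hB : B.Nonempty)
    (hpA : pu ∈ SFace A u) (hpB : pv ∈ SFace B v) :
    pu = pv ↔ (SFace A u ∩ SFace B v).Nonempty := by
  obtain ⟨u₀, m, hm, hLdef⟩ := hL
  constructor
  · intro h
    exact ⟨pu, hpA, h ▸ hpB⟩
  · rintro ⟨x, hxA, hxB⟩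
    obtain ⟨i, hi⟩ := hA
    have hiB : i ∈ B := by
      by_contra hiB
      have h1 : x i = u i := hxA.1 i hi
      have h2 : v i < x i := hxB.2 i hiB
      have h3 := huv i
      linarith
    have hpi : pu i = pv i := by
      rw [hpA.1 i hi, hpB.1 i hiB, ← hxA.1 i hi, hxB.1 i hiB]
    have hpuL : ∃ s : ℝ, pu = u₀ + s • m := by
      have h := hpu.1.1; rw [hLdef] at h; exact h
    have hpvL : ∃ t : ℝ, pv = u₀ + t • m := by
      have h := hpv.1.1; rw [hLdef] at h; exact h
    obtain ⟨s, hs⟩ := hpuL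
    obtain ⟨t, ht⟩ := hpvL
    have hsi := congrFun hs i
    have hti := congrFun ht i
    simp only [Pi.add_apply, Pi.smul_apply, smul_eq_mul] at hsi hti
    have hst : s = t := by
      have hmi := hm i
      have : s * m i = t * m i := by rw [hsi, hti] at hpi; linarith
      exact mul_right_cancel₀ (ne_of_gt hmi) this
    rw [hs, ht, hst]
end

section
/- Let L ⊆ ℝ^n be a line with positive slope and let u ∈ C̄. Then the set {u′ ∈ C̄ : u ≼ u′ and S_L(u) ∩ S_L(u′) ≠ ∅} has a greatest element, and this greatest element equals the greatest element of {c ∈ C̄ : c ≼ push_L(u)} (the latter set is nonempty since it contains u). In the paper's notation: for u ∈ C̄, overline(push_L(u)) = ū̄^L. -/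
/-- let `C̄` be a finite nonempty subset of `ℝⁿ` closed under
componentwise maxima, `L` a line with positive slope, `push_L w` the least
element of `{x ∈ L : w ≼ x}`, and `A^L_w` the unique nonempty subset of
`{1,…,n}` with `push_L w ∈ S_{A^L_w}(w)` (so `S_L(w) = S_{A^L_w}(w)`). Then
for every `u ∈ C̄` the set `{u' ∈ C̄ : u ≼ u' and S_L(u) ∩ S_L(u') ≠ ∅}` has
a greatest element, equal to the greatest element of
`{c ∈ C̄ : c ≼ push_L u}`; i.e. `overline(push_L u) = ū̄^L`. -/
theorem stmt_11 {n : ℕ} (hn : 0 < n) (L : Set (Fin n → ℝ)) (hL : PosLine L)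
    (Cbar : Finset (Fin n → ℝ)) (hCne : Cbar.Nonempty)
    (hclosed : ∀ a ∈ Cbar, ∀ b ∈ Cbar, a ⊔ b ∈ Cbar)
    (pushL : (Fin n → ℝ) → (Fin n → ℝ))
    (hpush : ∀ w : Fin n → ℝ, IsLeast {x | x ∈ L ∧ w ≤ x} (pushL w))
    (AL : (Fin n → ℝ) → Finset (Fin n))
    (hAL : ∀ w : Fin n → ℝ, (AL w).Nonempty ∧ pushL w ∈ SFace (AL w) w)
    (u : Fin n → ℝ) (hu : u ∈ Cbar) :
    ∃ g : Fin n → ℝ,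
      IsGreatest {u' | u' ∈ Cbar ∧ u ≤ u' ∧
        (SFace (AL u) u ∩ SFace (AL u') u').Nonempty} g ∧
      IsGreatest {c | c ∈ Cbar ∧ c ≤ pushL u} g := by
  classical
  obtain ⟨u₀, m, hm, hLdef⟩ := hL
  obtain ⟨⟨hpL, hup⟩, hpleast⟩ := hpush u
  set p := pushL u with hp
  set s : Set (Fin n → ℝ) := {c | c ∈ Cbar ∧ c ≤ p} with hs
  have hsclosed : ∀ a ∈ s, ∀ b ∈ s, a ⊔ b ∈ s := by
    rintro a ⟨ha, hap⟩ b ⟨hb, hbp⟩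
    exact ⟨hclosed a ha b hb, sup_le hap hbp⟩
  have hus : u ∈ s := ⟨hu, hup⟩
  set T := Cbar.filter (fun c => c ≤ p) with hT
  have hTne : T.Nonempty := ⟨u, by simp [hT, hu, hup]⟩
  set g := T.sup' hTne id with hg
  have hgs : g ∈ s := by
    refine Finset.sup'_mem s hsclosed T hTne id ?_
    intro b hb
    simp only [hT, Finset.mem_filter] at hb
    exact ⟨hb.1, hb.2⟩
  have hub : ∀ c ∈ s, c ≤ g := by
    intro c hc
    refine Finset.le_sup' id ?_
    simp only [hT, Finset.mem_filter]
    exact ⟨hc.1, hc.2⟩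
  have hgreat2 : IsGreatest s g := ⟨hgs, fun c hc => hub c hc⟩
  have hug : u ≤ g := hub u hus
  have hgp : g ≤ p := hgs.2
  obtain ⟨⟨hpgL, hgpg⟩, hpgleast⟩ := hpush g
  have hpg : pushL g = p :=
    le_antisymm (hpgleast ⟨hpL, hgp⟩) (hpleast ⟨hpgL, le_trans hug hgpg⟩)
  have hAu := hAL u
  have hAg := hAL g
  refine ⟨g, ⟨⟨hgs.1, hug, ⟨p, hAu.2, by rw [← hpg]; exact hAg.2⟩⟩, ?_⟩, hgreat2⟩
  rintro u' ⟨hu'C, huu', x, hxA, hxA'⟩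
  obtain ⟨⟨hpu'L, hu'pu'⟩, hpu'least⟩ := hpush u'
  obtain ⟨hAne, hpSA⟩ := hAu
  obtain ⟨hA'ne, hp'SA'⟩ := hAL u'
  obtain ⟨hxeq, hxgt⟩ := hxA
  obtain ⟨hxeq', hxgt'⟩ := hxA'
  have hu'x : u' ≤ x := by
    intro i
    by_cases hi : i ∈ AL u'
    · exact le_of_eq (hxeq' i hi).symm
    · exact le_of_lt (hxgt' i hi)
  have hkey : ∀ i ∈ AL u, u' i = u i := by
    intro i hi
    have h1 := hxeq i hi
    exact le_antisymm (h1 ▸ hu'x i) (huu' i)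
  obtain ⟨i₀, hi₀⟩ := hAne
  have hi₀' : i₀ ∈ AL u' := by
    by_contra h
    have h1 := hxgt' i₀ h
    rw [hkey i₀ hi₀, ← hxeq i₀ hi₀] at h1
    exact lt_irrefl _ h1
  have hco : pushL u' i₀ = p i₀ := by
    rw [hp'SA'.1 i₀ hi₀', hkey i₀ hi₀, ← hpSA.1 i₀ hi₀]
  have hLpts : pushL u' = p := by
    have h1 : p ∈ L := hpL
    have h2 : pushL u' ∈ L := hpu'L
    rw [hLdef] at h1 h2
    obtain ⟨t1, ht1⟩ := h1
    obtain ⟨t2, ht2⟩ := h2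
    have ht : t2 = t1 := by
      have hc := hco
      rw [ht1, ht2] at hc
      simp only [Pi.add_apply, Pi.smul_apply, smul_eq_mul, add_right_inj] at hc
      exact mul_right_cancel₀ (ne_of_gt (hm i₀)) hc
    rw [ht1, ht2, ht]
  exact hub u' ⟨hu'C, hLpts ▸ hu'pu'⟩
end

section
/- Let L ⊆ ℝ^n be a line with positive slope and let u ∈ L be such that {c ∈ C̄ : c ≼ u} is nonempty, with greatest element ū. Then ū is the greatest element of the set {u′ ∈ C̄ : ū ≼ u′ and S_L(ū) ∩ S_L(u′) ≠ ∅}; that is, ū = overline(overline(ū))^L. -/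
/-
Take `u' ≽ ū` in `C̄` and `x ∈ S_L(ū) ∩ S_L(u')`, and pick `i ∈ A^L_ū`. Then
`x_i = ū_i ≤ u'_i ≤ x_i`, so `u'_i = ū_i`, and the pushes of `ū` and `u'` to `L`
share their `i`-th coordinate. A line of positive slope meets each hyperplane
`{x_i = c}` once, so the two pushes coincide. Since `u ∈ L` lies above `ū`, it lies
above `push_L(ū) = push_L(u') ≽ u'`, and maximality of `ū` gives `u' ≼ ū`.
-/

theorem PosLine.eq_of_apply_eq {n : ℕ} {L : Set (Fin n → ℝ)} (hL : PosLine L)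
    {x y : Fin n → ℝ} (hx : x ∈ L) (hy : y ∈ L) {i : Fin n} (hxy : x i = y i) :
    x = y := by
  obtain ⟨u₀, m, hm, rfl⟩ := hL
  obtain ⟨s, rfl⟩ := hx
  obtain ⟨t, rfl⟩ := hy
  have hst : s = t := by
    simp only [Pi.add_apply, Pi.smul_apply, smul_eq_mul, add_right_inj] at hxy
    exact mul_right_cancel₀ (hm i).ne' hxy
  rw [hst]

theorem SFace.mem_of_le {n : ℕ} {A B : Finset (Fin n)} {u v x : Fin n → ℝ}
    (hxu : x ∈ SFace A u) (hxv : x ∈ SFace B v) (huv : u ≤ v) {i : Fin n}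
    (hi : i ∈ A) : i ∈ B := by
  by_contra hiB
  exact (hxv.2 i hiB).not_ge (by rw [hxu.1 i hi]; exact huv i)

theorem stmt_12_general {n : ℕ} (L : Set (Fin n → ℝ)) (hL : PosLine L)
    (Cbar : Finset (Fin n → ℝ))
    (pushL : (Fin n → ℝ) → (Fin n → ℝ))
    (hpush : ∀ w : Fin n → ℝ, IsLeast {x | x ∈ L ∧ w ≤ x} (pushL w))
    (AL : (Fin n → ℝ) → Finset (Fin n))
    (hAL : ∀ w : Fin n → ℝ, (AL w).Nonempty ∧ pushL w ∈ SFace (AL w) w)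
    (u ubar : Fin n → ℝ) (huL : u ∈ L)
    (hubar : IsGreatest {c | c ∈ Cbar ∧ c ≤ u} ubar) :
    IsGreatest {u' | u' ∈ Cbar ∧ ubar ≤ u' ∧
      (SFace (AL ubar) ubar ∩ SFace (AL u') u').Nonempty} ubar := by
  obtain ⟨⟨i, hi⟩, hpush_ubar⟩ := hAL ubar
  refine ⟨⟨hubar.1.1, le_rfl, pushL ubar, hpush_ubar, hpush_ubar⟩, ?_⟩
  rintro u' ⟨hu'C, hle, x, hxubar, hxu'⟩
  have hi' : i ∈ AL u' := SFace.mem_of_le hxubar hxu' hle hi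
  have hu'i : u' i = ubar i := by rw [← hxu'.1 i hi', hxubar.1 i hi]
  have hpush_eq : pushL u' = pushL ubar :=
    hL.eq_of_apply_eq (hpush u').1.1 (hpush ubar).1.1 <| by
      rw [(hAL u').2.1 i hi', hpush_ubar.1 i hi, hu'i]
  have hpush_le : pushL ubar ≤ u := (hpush ubar).2 ⟨huL, hubar.1.2⟩
  exact hubar.2 ⟨hu'C, ((hpush u').1.2.trans hpush_eq.le).trans hpush_le⟩

/-- let `C̄` be a finite nonempty subset of `ℝⁿ` closed under
componentwise maxima, `L` a line with positive slope, `u ∈ L` with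
`{c ∈ C̄ : c ≼ u}` nonempty and greatest element `ū`. Then `ū` is the
greatest element of `{u' ∈ C̄ : ū ≼ u' and S_L(ū) ∩ S_L(u') ≠ ∅}`; that is,
`ū = overline(overline(ū))^L`. -/
theorem stmt_12 {n : ℕ} (hn : 0 < n) (L : Set (Fin n → ℝ)) (hL : PosLine L)
    (Cbar : Finset (Fin n → ℝ)) (hCne : Cbar.Nonempty)
    (hclosed : ∀ a ∈ Cbar, ∀ b ∈ Cbar, a ⊔ b ∈ Cbar)
    (pushL : (Fin n → ℝ) → (Fin n → ℝ))
    (hpush : ∀ w : Fin n → ℝ, IsLeast {x | x ∈ L ∧ w ≤ x} (pushL w))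
    (AL : (Fin n → ℝ) → Finset (Fin n))
    (hAL : ∀ w : Fin n → ℝ, (AL w).Nonempty ∧ pushL w ∈ SFace (AL w) w)
    (u ubar : Fin n → ℝ) (huL : u ∈ L)
    (hubar : IsGreatest {c | c ∈ Cbar ∧ c ≤ u} ubar) :
    IsGreatest {u' | u' ∈ Cbar ∧ ubar ≤ u' ∧
      (SFace (AL ubar) ubar ∩ SFace (AL u') u').Nonempty} ubar :=
  stmt_12_general L hL Cbar pushL hpush AL hAL u ubar huL hubar
end

section
/- Let L, L′ ⊆ ℝ^n be lines with positive slope such that L ∼_C̄ L′, and let u ∈ L be such that {c ∈ C̄ : c ≼ u} is nonempty, with greatest element ū. Then the greatest element of {c ∈ C̄ : c ≼ push_{L′}(ū)} exists and equals ū; that is, overline(push_{L′}(ū)) = ū. -/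
/-- let `L ∼_C̄ L'` be equivalent lines with positive slope
(i.e. `A^L_c = A^{L'}_c` for all `c ∈ C̄`), and let `u ∈ L` with
`{c ∈ C̄ : c ≼ u}` nonempty and greatest element `ū`. Then the greatest
element of `{c ∈ C̄ : c ≼ push_{L'}(ū)}` exists and equals `ū`; that is,
`overline(push_{L'}(ū)) = ū`. -/
theorem stmt_13 {n : ℕ} (hn : 0 < n) (L L' : Set (Fin n → ℝ))
    (hL : PosLine L) (hL' : PosLine L')
    (Cbar : Finset (Fin n → ℝ)) (hCne : Cbar.Nonempty)
    (hclosed : ∀ a ∈ Cbar, ∀ b ∈ Cbar, a ⊔ b ∈ Cbar)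
    (pushL pushL' : (Fin n → ℝ) → (Fin n → ℝ))
    (hpush : ∀ w : Fin n → ℝ, IsLeast {x | x ∈ L ∧ w ≤ x} (pushL w))
    (hpush' : ∀ w : Fin n → ℝ, IsLeast {x | x ∈ L' ∧ w ≤ x} (pushL' w))
    (AL AL' : (Fin n → ℝ) → Finset (Fin n))
    (hAL : ∀ w : Fin n → ℝ, (AL w).Nonempty ∧ pushL w ∈ SFace (AL w) w)
    (hAL' : ∀ w : Fin n → ℝ, (AL' w).Nonempty ∧ pushL' w ∈ SFace (AL' w) w)
    (hequiv : ∀ c ∈ Cbar, AL c = AL' c)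
    (u ubar : Fin n → ℝ) (huL : u ∈ L)
    (hubar : IsGreatest {c | c ∈ Cbar ∧ c ≤ u} ubar) :
    IsGreatest {c | c ∈ Cbar ∧ c ≤ pushL' ubar} ubar := by
  obtain ⟨⟨hubarC, hubaru⟩, hgr⟩ := hubar
  have hple' := hpush' ubar
  have hub_le : ubar ≤ pushL' ubar := hple'.1.2
  refine ⟨⟨hubarC, hub_le⟩, ?_⟩
  rintro c ⟨hcC, hcle⟩
  set d := c ⊔ ubar with hd
  have hdC : d ∈ Cbar := hclosed c hcC ubar hubarC
  have hdle : d ≤ pushL' ubar := sup_le hcle hub_le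
  have hub_d : ubar ≤ d := le_sup_right
  have h1 : pushL' d = pushL' ubar :=
    le_antisymm ((hpush' d).2 ⟨hple'.1.1, hdle⟩)
      (hple'.2 ⟨(hpush' d).1.1, le_trans hub_d (hpush' d).1.2⟩)
  obtain ⟨i, hiA⟩ := (hAL ubar).1
  have hA_eq : AL ubar = AL' ubar := hequiv ubar hubarC
  have hpush_ubar_i : pushL ubar i = ubar i := (hAL ubar).2.1 i hiA
  have hpush'_ubar_i : pushL' ubar i = ubar i := (hAL' ubar).2.1 i (hA_eq ▸ hiA)
  have hd_i : d i = ubar i :=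
    le_antisymm (by simpa [hpush'_ubar_i] using hdle i) (hub_d i)
  have hiB : i ∈ AL' d := by
    by_contra h
    have := (hAL' d).2.2 i h
    rw [h1, hpush'_ubar_i, hd_i] at this
    exact lt_irrefl _ this
  have hiB' : i ∈ AL d := (hequiv d hdC) ▸ hiB
  have hpushd_i : pushL d i = d i := (hAL d).2.1 i hiB'
  obtain ⟨u₀, m, hm, hLeq⟩ := hL
  have h2 : pushL d = pushL ubar := by
    have hmemd : pushL d ∈ L := (hpush d).1.1
    have hmemu : pushL ubar ∈ L := (hpush ubar).1.1
    rw [hLeq] at hmemd hmemu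
    obtain ⟨t₁, ht₁⟩ := hmemd
    obtain ⟨t₂, ht₂⟩ := hmemu
    have hcoord : u₀ i + t₁ * m i = u₀ i + t₂ * m i := by
      have e1 : pushL d i = u₀ i + t₁ * m i := by rw [ht₁]; rfl
      have e2 : pushL ubar i = u₀ i + t₂ * m i := by rw [ht₂]; rfl
      rw [← e1, ← e2, hpushd_i, hd_i, hpush_ubar_i]
    have ht : t₁ = t₂ := by
      have := mul_right_cancel₀ (ne_of_gt (hm i)) (by linarith : t₁ * m i = t₂ * m i)
      exact this
    rw [ht₁, ht₂, ht]
  have hdu : d ≤ u :=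
    le_trans (hpush d).1.2 (h2 ▸ (hpush ubar).2 ⟨huL, hubaru⟩)
  exact le_trans le_sup_left (hgr ⟨hdC, hdu⟩)
end

section
/- Let 𝕍 be a persistence module over ℝ^n satisfying hypothesis (⋆) with respect to C̄, and let L ⊆ ℝ^n be a line with positive slope. Then for all u ≺ v with u, v ∈ C̄, one has ρ(push_L(u), push_L(v)) = ρ(û, v̂), where for w ∈ C̄, ŵ denotes the greatest element of {w′ ∈ C̄ : w ≼ w′ and S_L(w) ∩ S_L(w′) ≠ ∅} (equivalently, ŵ = overline(push_L(w)), the greatest element of {c ∈ C̄ : c ≼ push_L(w)}). -/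
/-- A persistence module over `ℝⁿ` (with the componentwise order) valued in
finite-dimensional `𝕜`-vector spaces: vector spaces `Vec u` and transition
maps `map : Vec u →ₗ Vec v` for `u ≼ v`, functorially. -/
structure PersistenceModule (n : ℕ) (𝕜 : Type) [Field 𝕜] where
  Vec : (Fin n → ℝ) → Type
  [addCommGroup : ∀ u, AddCommGroup (Vec u)]
  [module : ∀ u, Module 𝕜 (Vec u)]
  [finiteDimensional : ∀ u, FiniteDimensional 𝕜 (Vec u)]
  map : ∀ {u v : Fin n → ℝ}, u ≤ v → (Vec u →ₗ[𝕜] Vec v)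
  map_id : ∀ u : Fin n → ℝ, map (le_refl u) = LinearMap.id
  map_comp : ∀ {u v w : Fin n → ℝ} (h₁ : u ≤ v) (h₂ : v ≤ w),
    (map h₂).comp (map h₁) = map (h₁.trans h₂)

attribute [instance] PersistenceModule.addCommGroup PersistenceModule.module
  PersistenceModule.finiteDimensional

/-- The rank invariant `ρ(u,v) = rank i^{u,v}` (by convention `0` if `u ≼ v`
fails). -/
noncomputable def rho {n : ℕ} {𝕜 : Type} [Field 𝕜] (M : PersistenceModule n 𝕜)
    (u v : Fin n → ℝ) : ℕ :=
  letI : Decidable (u ≤ v) := Classical.dec _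
  if h : u ≤ v then Module.finrank 𝕜 (LinearMap.range (M.map h)) else 0

/-- Hypothesis (⋆) relative to a finite set `C̄ ⊆ ℝⁿ`: for all `u ≼ v`,
`ρ(u,v) = ρ(ū,v̄)` whenever `{c ∈ C̄ : c ≼ u}` is nonempty (`ū` denoting the
greatest element of `{c ∈ C̄ : c ≼ u}`), and `ρ(u,v) = 0` otherwise. -/
def HypStar {n : ℕ} {𝕜 : Type} [Field 𝕜] (M : PersistenceModule n 𝕜)
    (Cbar : Finset (Fin n → ℝ)) : Prop :=
  ∀ u v : Fin n → ℝ, u ≤ v →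
    (((∃ c ∈ Cbar, c ≤ u) →
      ∀ ub vb : Fin n → ℝ, IsGreatest {c | c ∈ Cbar ∧ c ≤ u} ub →
        IsGreatest {c | c ∈ Cbar ∧ c ≤ v} vb → rho M u v = rho M ub vb) ∧
      (¬ (∃ c ∈ Cbar, c ≤ u) → rho M u v = 0))

/-- Forward direction: if `u ≤ w` and the faces intersect, then the pushes agree
and hence `w ≤ pushL u`. -/
lemma face_inter_imp_le {n : ℕ} {L : Set (Fin n → ℝ)} (hL : PosLine L)
    {pushL : (Fin n → ℝ) → (Fin n → ℝ)}
    (hpush : ∀ w : Fin n → ℝ, IsLeast {x | x ∈ L ∧ w ≤ x} (pushL w))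
    {AL : (Fin n → ℝ) → Finset (Fin n)}
    (hAL : ∀ w : Fin n → ℝ, (AL w).Nonempty ∧ pushL w ∈ SFace (AL w) w)
    {u w : Fin n → ℝ} (huw : u ≤ w)
    (hne : (SFace (AL u) u ∩ SFace (AL w) w).Nonempty) :
    w ≤ pushL u := by
  obtain ⟨u₀, m, hm, hLeq⟩ := hL
  obtain ⟨x, hx1, hx2⟩ := hne
  obtain ⟨i, hi⟩ := (hAL u).1
  have hxu : x i = u i := hx1.1 i hi
  -- w i = u i
  have hwx : w i ≤ x i := by
    by_cases h : i ∈ AL w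
    · exact (hx2.1 i h).ge
    · exact (hx2.2 i h).le
  have hwi : w i = u i := le_antisymm (hxu ▸ hwx) (huw i)
  -- i ∈ AL w
  have hiw : i ∈ AL w := by
    by_contra h
    have := hx2.2 i h
    rw [hxu, ← hwi] at this
    exact lt_irrefl _ this
  -- pushes agree at coordinate i
  have hpu : pushL u i = u i := (hAL u).2.1 i hi
  have hpw : pushL w i = w i := (hAL w).2.1 i hiw
  -- both pushes lie on L
  obtain ⟨s, hs⟩ : ∃ t : ℝ, pushL u = u₀ + t • m := by
    have := (hpush u).1.1; rwa [hLeq] at this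
  obtain ⟨t, ht⟩ : ∃ t : ℝ, pushL w = u₀ + t • m := by
    have := (hpush w).1.1; rwa [hLeq] at this
  have hst : s = t := by
    have h1 : u₀ i + s * m i = u₀ i + t * m i := by
      have e1 : pushL u i = u₀ i + s * m i := by rw [hs]; rfl
      have e2 : pushL w i = u₀ i + t * m i := by rw [ht]; rfl
      rw [← e1, ← e2, hpu, hpw, hwi]
    have := add_left_cancel h1
    exact mul_right_cancel₀ (ne_of_gt (hm i)) this
  have heq : pushL u = pushL w := by rw [hs, ht, hst]
  rw [heq]
  exact (hpush w).1.2

/-- Backward direction: if `u ≤ w ≤ pushL u` then the faces intersect. -/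
lemma le_imp_face_inter {n : ℕ} {L : Set (Fin n → ℝ)}
    {pushL : (Fin n → ℝ) → (Fin n → ℝ)}
    (hpush : ∀ w : Fin n → ℝ, IsLeast {x | x ∈ L ∧ w ≤ x} (pushL w))
    {AL : (Fin n → ℝ) → Finset (Fin n)}
    (hAL : ∀ w : Fin n → ℝ, (AL w).Nonempty ∧ pushL w ∈ SFace (AL w) w)
    {u w : Fin n → ℝ} (huw : u ≤ w) (hwp : w ≤ pushL u) :
    (SFace (AL u) u ∩ SFace (AL w) w).Nonempty := by
  have h1 : pushL w ≤ pushL u := (hpush w).2 ⟨(hpush u).1.1, hwp⟩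
  have h2 : pushL u ≤ pushL w := (hpush u).2 ⟨(hpush w).1.1, huw.trans (hpush w).1.2⟩
  have heq : pushL u = pushL w := le_antisymm h2 h1
  exact ⟨pushL u, (hAL u).2, heq ▸ (hAL w).2⟩

/-- The `hat` point is also the greatest element of `{c ∈ C̄ : c ≤ pushL u}`. -/
lemma hat_is_greatest {n : ℕ} {L : Set (Fin n → ℝ)} (hL : PosLine L)
    {pushL : (Fin n → ℝ) → (Fin n → ℝ)}
    (hpush : ∀ w : Fin n → ℝ, IsLeast {x | x ∈ L ∧ w ≤ x} (pushL w))
    {AL : (Fin n → ℝ) → Finset (Fin n)}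
    (hAL : ∀ w : Fin n → ℝ, (AL w).Nonempty ∧ pushL w ∈ SFace (AL w) w)
    {Cbar : Finset (Fin n → ℝ)}
    (hclosed : ∀ a ∈ Cbar, ∀ b ∈ Cbar, a ⊔ b ∈ Cbar)
    {u : Fin n → ℝ} (hu : u ∈ Cbar) {uhat : Fin n → ℝ}
    (huhat : IsGreatest {w | w ∈ Cbar ∧ u ≤ w ∧
      (SFace (AL u) u ∩ SFace (AL w) w).Nonempty} uhat) :
    IsGreatest {c | c ∈ Cbar ∧ c ≤ pushL u} uhat := by
  obtain ⟨⟨hmemC, hule, hface⟩, hub⟩ := huhat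
  constructor
  · exact ⟨hmemC, face_inter_imp_le hL hpush hAL hule hface⟩
  · rintro c ⟨hcC, hcp⟩
    have hsupC : c ⊔ u ∈ Cbar := hclosed c hcC u hu
    have h1 : u ≤ c ⊔ u := le_sup_right
    have h2 : c ⊔ u ≤ pushL u := sup_le hcp (hpush u).1.2
    have : c ⊔ u ≤ uhat := hub ⟨hsupC, h1, le_imp_face_inter hpush hAL h1 h2⟩
    exact le_sup_left.trans this

/-- let `𝕍` be a persistence module over `ℝⁿ` satisfying
hypothesis (⋆) with respect to `C̄` and `L` a line with positive slope. Then
for all `u ≺ v` with `u, v ∈ C̄`,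
`ρ(push_L u, push_L v) = ρ(û, v̂)`, where `ŵ` denotes the greatest element of
`{w' ∈ C̄ : w ≼ w' and S_L(w) ∩ S_L(w') ≠ ∅}`. -/
theorem stmt_15 {n : ℕ} (hn : 0 < n) {𝕜 : Type} [Field 𝕜]
    (M : PersistenceModule n 𝕜)
    (Cbar : Finset (Fin n → ℝ)) (hCne : Cbar.Nonempty)
    (hclosed : ∀ a ∈ Cbar, ∀ b ∈ Cbar, a ⊔ b ∈ Cbar)
    (hstar : HypStar M Cbar)
    (L : Set (Fin n → ℝ)) (hL : PosLine L)
    (pushL : (Fin n → ℝ) → (Fin n → ℝ))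
    (hpush : ∀ w : Fin n → ℝ, IsLeast {x | x ∈ L ∧ w ≤ x} (pushL w))
    (AL : (Fin n → ℝ) → Finset (Fin n))
    (hAL : ∀ w : Fin n → ℝ, (AL w).Nonempty ∧ pushL w ∈ SFace (AL w) w)
    (u v : Fin n → ℝ) (hu : u ∈ Cbar) (hv : v ∈ Cbar)
    (huv : ∀ i, u i < v i)
    (uhat vhat : Fin n → ℝ)
    (huhat : IsGreatest {w | w ∈ Cbar ∧ u ≤ w ∧
      (SFace (AL u) u ∩ SFace (AL w) w).Nonempty} uhat)
    (hvhat : IsGreatest {w | w ∈ Cbar ∧ v ≤ w ∧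
      (SFace (AL v) v ∩ SFace (AL w) w).Nonempty} vhat) :
    rho M (pushL u) (pushL v) = rho M uhat vhat := by
  have hle : u ≤ v := fun i => (huv i).le
  have hpp : pushL u ≤ pushL v :=
    (hpush u).2 ⟨(hpush v).1.1, hle.trans (hpush v).1.2⟩
  exact (hstar (pushL u) (pushL v) hpp).1 ⟨u, hu, (hpush u).1.2⟩ uhat vhat
    (hat_is_greatest hL hpush hAL hclosed hu huhat)
    (hat_is_greatest hL hpush hAL hclosed hv hvhat)
end

section
/- Let 𝕍 be a persistence module over ℝ^n satisfying hypothesis (⋆) with respect to C̄, and let L = {u₀ + t·m : t ∈ ℝ} be a line with positive slope (0 ≺ m). Write push_L(C̄) = {c¹ ≺ c² ≺ … ≺ c^r} in increasing order. For u ≺ v with u, v ∈ L and ε > 0, whenever u + εm ≺ v − εm define Δ_ε(u,v) = ρ(u+εm, v−εm) − ρ(u−εm, v−εm) − ρ(u+εm, v+εm) + ρ(u−εm, v+εm). Then: (a) if u = c^i and v = c^j for some i < j, there exists ε₀ > 0 such that for all 0 < ε ≤ ε₀ with u + εm ≺ v − εm, Δ_ε(u,v) = ρ(c^i, c^{j−1})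 − ρ(c^{i−1}, c^{j−1}) − ρ(c^i, c^j) + ρ(c^{i−1}, c^j), with the convention that every term involving c⁰ (the case i = 1 or j = 1) is 0; (b) if u ∉ push_L(C̄) or v ∉ push_L(C̄), there exists ε₀ > 0 such that Δ_ε(u,v) = 0 for all 0 < ε ≤ ε₀ with u + εm ≺ v − εm. Consequently the multiplicity μ_𝕍(u,v) of a point (u,v) with u ≺ v on L can be nonzero only when both u and v belong to push_L(C̄), and then it is given by the formula in (a). -/
/-- The strict componentwise order `u ≺ v` on `ℝⁿ`. -/
def SLt {n : ℕ} (u v : Fin n → ℝ) : Prop := ∀ i, u i < v i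

/-- The multiplicity `μ_𝕍(u,v)` of a pair `u ≺ v`: the minimum over vectors
`e ≻ 0` with `u + e ≺ v − e` of
`ρ(u+e,v−e) − ρ(u−e,v−e) − ρ(u+e,v+e) + ρ(u−e,v+e)`. -/
noncomputable def mu {n : ℕ} {𝕜 : Type} [Field 𝕜] (M : PersistenceModule n 𝕜)
    (u v : Fin n → ℝ) : ℤ :=
  sInf {z : ℤ | ∃ e : Fin n → ℝ, SLt 0 e ∧ SLt (u + e) (v - e) ∧
    z = (rho M (u + e) (v - e) : ℤ) - (rho M (u - e) (v - e) : ℤ)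
      - (rho M (u + e) (v + e) : ℤ) + (rho M (u - e) (v + e) : ℤ)}

/-- The multiplicity at infinity `μ_𝕍(u,∞)`: the minimum over `e ≻ 0` and
`v ≽ u` of `ρ(u+e,v) − ρ(u−e,v)`. -/
noncomputable def muInf {n : ℕ} {𝕜 : Type} [Field 𝕜] (M : PersistenceModule n 𝕜)
    (u : Fin n → ℝ) : ℤ :=
  sInf {z : ℤ | ∃ e v : Fin n → ℝ, SLt 0 e ∧ u ≤ v ∧
    z = (rho M (u + e) v : ℤ) - (rho M (u - e) v : ℤ)}

/-- `ρ(cⁱ, cʲ)` as an integer, with the convention that any term involving the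
index `0` (i.e. `c⁰`) is `0`. -/
noncomputable def rhoz {n : ℕ} {𝕜 : Type} [Field 𝕜] (M : PersistenceModule n 𝕜)
    (c : ℕ → (Fin n → ℝ)) (i j : ℕ) : ℤ :=
  if i = 0 ∨ j = 0 then 0 else (rho M (c i) (c j) : ℤ)

/-!
For a point `w` of `L` and `x ∈ C̄` we have `x ≼ w` iff `push_L(x) ≼ w`, so by (⋆) the rank
`ρ(w, w')` of two points `w ≼ w'` of `L` only depends on how many of the `cˡ` lie below `w` and
below `w'`. Moving a point of `L` by `±εm`, with `ε` small, changes that count only when the point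
is one of the `cˡ`, and then it drops by one on the `-εm` side; this gives (a) and (b).

For the multiplicity, the box quantity `ρ(a',b) - ρ(a,b) - ρ(a',b') + ρ(a,b')` can only grow when
the box `[a,a'] × [b,b']` is enlarged (each enlargement of one corner is an instance of the
Frobenius rank inequality), so the minimum over all `e ≻ 0` is attained at `e = εm` for small `ε`.
-/

open Filter Topology

section FrobeniusRank

open Module LinearMap

variable {𝕜 : Type*} [Field 𝕜] {U V W X : Type*} [AddCommGroup U] [Module 𝕜 U]
  [AddCommGroup V] [Module 𝕜 V] [AddCommGroup W] [Module 𝕜 W] [AddCommGroup X] [Module 𝕜 X]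

theorem finrank_range_comp_add_finrank_ker_inf_range [FiniteDimensional 𝕜 V]
    (f : U →ₗ[𝕜] V) (g : V →ₗ[𝕜] W) :
    finrank 𝕜 (range (g ∘ₗ f)) + finrank 𝕜 ↥(ker g ⊓ range f) = finrank 𝕜 (range f) := by
  have h := (g.domRestrict (range f)).finrank_range_add_finrank_ker
  have hker : finrank 𝕜 ↥(Submodule.comap (range f).subtype (ker g)) =
      finrank 𝕜 ↥(ker g ⊓ range f) := by
    rw [← (Submodule.comapSubtypeEquivOfLe inf_le_right).finrank_eq, Submodule.comap_inf,
      Submodule.comap_subtype_self, inf_top_eq]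
  rwa [range_domRestrict, ← range_comp, ker_domRestrict, hker] at h

/-- Frobenius' rank inequality. -/
theorem finrank_range_comp_add_finrank_range_comp_le [FiniteDimensional 𝕜 W]
    (f : U →ₗ[𝕜] V) (g : V →ₗ[𝕜] W) (h : W →ₗ[𝕜] X) :
    finrank 𝕜 (range (g ∘ₗ f)) + finrank 𝕜 (range (h ∘ₗ g)) ≤
      finrank 𝕜 (range g) + finrank 𝕜 (range (h ∘ₗ g ∘ₗ f)) := by
  have hgf := finrank_range_comp_add_finrank_ker_inf_range (g ∘ₗ f) h
  have hg := finrank_range_comp_add_finrank_ker_inf_range g h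
  have hle : finrank 𝕜 ↥(ker h ⊓ range (g ∘ₗ f)) ≤ finrank 𝕜 ↥(ker h ⊓ range g) :=
    Submodule.finrank_mono (inf_le_inf_left _ (range_comp_le_range f g))
  omega

end FrobeniusRank

theorem SLt.le {n : ℕ} {u v : Fin n → ℝ} (h : SLt u v) : u ≤ v := fun k => (h k).le

section RankInvariant

open Module LinearMap

variable {n : ℕ} {𝕜 : Type} [Field 𝕜] (M : PersistenceModule n 𝕜)

theorem rho_of_le {u v : Fin n → ℝ} (h : u ≤ v) :
    rho M u v = finrank 𝕜 (range (M.map h)) :=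
  dif_pos h

theorem rho_add_rho_le {a a' b b' : Fin n → ℝ} (ha : a ≤ a') (hb : a' ≤ b) (hb' : b ≤ b') :
    rho M a b + rho M a' b' ≤ rho M a' b + rho M a b' := by
  have h := finrank_range_comp_add_finrank_range_comp_le (M.map ha) (M.map hb) (M.map hb')
  rw [M.map_comp ha hb, M.map_comp hb hb', M.map_comp (ha.trans hb) hb'] at h
  rwa [rho_of_le M (ha.trans hb), rho_of_le M (hb.trans hb'), rho_of_le M hb,
    rho_of_le M (ha.trans (hb.trans hb'))]

/-- `boxRank M (u - e) (u + e) (v - e) (v + e)` is the quantity minimised in `mu`. -/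
noncomputable def boxRank (a a' b b' : Fin n → ℝ) : ℤ :=
  rho M a' b - rho M a b - rho M a' b' + rho M a b'

theorem boxRank_mono {a₁ a₁' a₂' a₂ b₁ b₁' b₂' b₂ : Fin n → ℝ} (h₁ : a₁ ≤ a₁') (h₂ : a₁' ≤ a₂')
    (h₃ : a₂' ≤ a₂) (h₄ : a₂ ≤ b₁) (h₅ : b₁ ≤ b₁') (h₆ : b₁' ≤ b₂') (h₇ : b₂' ≤ b₂) :
    boxRank M a₁' a₂' b₁' b₂' ≤ boxRank M a₁ a₂ b₁ b₂ := by
  have e₁ := rho_add_rho_le M h₁ (h₂.trans (h₃.trans (h₄.trans h₅))) h₆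
  have e₂ := rho_add_rho_le M h₃ (h₄.trans h₅) h₆
  have e₃ := rho_add_rho_le M (h₁.trans (h₂.trans h₃)) h₄ h₅
  have e₄ := rho_add_rho_le M (h₁.trans (h₂.trans h₃)) (h₄.trans (h₅.trans h₆)) h₇
  simp only [boxRank]
  omega

end RankInvariant

section SmallShifts

variable {n : ℕ} {u v m : Fin n → ℝ}

theorem sub_smul_le_add_smul (hm : 0 ≤ m) {ε : ℝ} (hε : 0 ≤ ε) : u - ε • m ≤ u + ε • m :=
  (sub_le_self u (smul_nonneg hε hm)).trans (le_add_of_nonneg_right (smul_nonneg hε hm))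

theorem eventually_slt_add_smul_sub_smul (m : Fin n → ℝ) (h : SLt u v) :
    ∀ᶠ ε in 𝓝 (0 : ℝ), SLt (u + ε • m) (v - ε • m) := by
  refine eventually_all.2 fun k => ?_
  have hu : Tendsto (fun ε : ℝ => u k + ε * m k) (𝓝 0) (𝓝 (u k)) := by
    simpa using ((tendsto_id (x := 𝓝 (0 : ℝ))).mul_const (m k)).const_add (u k)
  have hv : Tendsto (fun ε : ℝ => v k - ε * m k) (𝓝 0) (𝓝 (v k)) := by
    simpa using ((tendsto_id (x := 𝓝 (0 : ℝ))).mul_const (m k)).const_sub (v k)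
  simpa using hu.eventually_lt hv (h k)

theorem eventually_smul_slt (m : Fin n → ℝ) {e : Fin n → ℝ} (he : SLt 0 e) :
    ∀ᶠ ε in 𝓝 (0 : ℝ), SLt (ε • m) e := by
  refine eventually_all.2 fun k => ?_
  have hlim : Tendsto (fun ε : ℝ => ε * m k) (𝓝 0) (𝓝 0) := by
    simpa using (tendsto_id (x := 𝓝 (0 : ℝ))).mul_const (m k)
  simpa using hlim.eventually_lt_const (he k)

theorem exists_forall_of_eventually_nhdsGT {p : ℝ → Prop} (h : ∀ᶠ ε in 𝓝[>] (0 : ℝ), p ε) :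
    ∃ ε₀ : ℝ, 0 < ε₀ ∧ ∀ ε : ℝ, 0 < ε → ε ≤ ε₀ → p ε := by
  obtain ⟨ε₀, hε₀, hsub⟩ := mem_nhdsGT_iff_exists_Ioc_subset.1 h
  exact ⟨ε₀, hε₀, fun ε hε hεle => hsub ⟨hε, hεle⟩⟩

theorem mu_eq_of_eventually_boxRank_eq {𝕜 : Type} [Field 𝕜] (M : PersistenceModule n 𝕜)
    (hm : SLt 0 m) (huv : SLt u v) {K : ℤ}
    (h : ∀ᶠ ε in 𝓝[>] (0 : ℝ), SLt (u + ε • m) (v - ε • m) →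
      boxRank M (u - ε • m) (u + ε • m) (v - ε • m) (v + ε • m) = K) :
    mu M u v = K := by
  have hpos : ∀ᶠ ε in 𝓝[>] (0 : ℝ), 0 < ε := self_mem_nhdsWithin
  refine IsLeast.csInf_eq ⟨?_, ?_⟩
  · have hsep := (eventually_slt_add_smul_sub_smul m huv).filter_mono
      (nhdsWithin_le_nhds (s := Set.Ioi 0))
    obtain ⟨ε, hε, hslt, hK⟩ := (hpos.and (hsep.and h)).exists
    exact ⟨ε • m, fun k => by simpa using mul_pos hε (hm k), hslt, (hK hslt).symm⟩
  · rintro _ ⟨e, he, hslt, rfl⟩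
    have hsmall := (eventually_smul_slt m he).filter_mono (nhdsWithin_le_nhds (s := Set.Ioi 0))
    obtain ⟨ε, hε, hεe, hK⟩ := (hpos.and (hsmall.and h)).exists
    have hle : ε • m ≤ e := hεe.le
    have hslt' : SLt (u + ε • m) (v - ε • m) := fun k => by
      have h₁ := hεe k
      have h₂ := hslt k
      simp only [Pi.add_apply, Pi.sub_apply, Pi.smul_apply, smul_eq_mul] at h₁ h₂ ⊢
      linarith
    rw [← hK hslt']
    exact boxRank_mono M (sub_le_sub_left hle u) (sub_smul_le_add_smul hm.le hε.le)
      (add_le_add le_rfl hle) hslt.le (sub_le_sub_left hle v) (sub_smul_le_add_smul hm.le hε.le)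
      (add_le_add le_rfl hle)

end SmallShifts

section Line

open Set

variable {n : ℕ} {u₀ m : Fin n → ℝ}

theorem add_smul_le_add_smul_iff (hn : 0 < n) (hm : SLt 0 m) {s s' : ℝ} :
    u₀ + s • m ≤ u₀ + s' • m ↔ s ≤ s' := by
  refine ⟨fun h => ?_, fun h k => ?_⟩
  · have h₀ := h ⟨0, hn⟩
    simp only [Pi.add_apply, Pi.smul_apply, smul_eq_mul, add_le_add_iff_left] at h₀
    exact le_of_mul_le_mul_right h₀ (hm _)
  · simp only [Pi.add_apply, Pi.smul_apply, smul_eq_mul, add_le_add_iff_left]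
    exact mul_le_mul_of_nonneg_right h (hm k).le

theorem lt_of_add_smul_slt_add_smul (hn : 0 < n) (hm : SLt 0 m) {s s' : ℝ}
    (h : SLt (u₀ + s • m) (u₀ + s' • m)) : s < s' := by
  have h₀ := h ⟨0, hn⟩
  simp only [Pi.add_apply, Pi.smul_apply, smul_eq_mul, add_lt_add_iff_left] at h₀
  exact lt_of_mul_lt_mul_right h₀ (hm _).le

theorem add_smul_add_smul (s ε : ℝ) : u₀ + s • m + ε • m = u₀ + (s + ε) • m := by
  rw [add_smul, add_assoc]

theorem add_smul_sub_smul (s ε : ℝ) : u₀ + s • m - ε • m = u₀ + (s - ε) • m := by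
  rw [sub_smul, add_sub_assoc]

theorem add_smul_mem_line {L : Set (Fin n → ℝ)} (hL : L = {x | ∃ s : ℝ, x = u₀ + s • m})
    ⦃w : Fin n → ℝ⦄ (hw : w ∈ L) (ε : ℝ) : w + ε • m ∈ L ∧ w - ε • m ∈ L := by
  subst hL
  obtain ⟨s, rfl⟩ := hw
  exact ⟨⟨s + ε, add_smul_add_smul s ε⟩, ⟨s - ε, add_smul_sub_smul s ε⟩⟩

theorem eventually_le_add_iff_le (x a : ℝ) : ∀ᶠ ε in 𝓝[>] (0 : ℝ), (x ≤ a + ε ↔ x ≤ a) := by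
  rcases le_or_gt x a with h | h
  · filter_upwards [self_mem_nhdsWithin] with ε (hε : 0 < ε)
    exact iff_of_true (by linarith) h
  · filter_upwards [Ioo_mem_nhdsGT (sub_pos.2 h)] with ε hε
    exact iff_of_false (by linarith [hε.2]) h.not_ge

theorem eventually_le_sub_iff_lt (x a : ℝ) : ∀ᶠ ε in 𝓝[>] (0 : ℝ), (x ≤ a - ε ↔ x < a) := by
  rcases lt_or_ge x a with h | h
  · filter_upwards [Ioo_mem_nhdsGT (sub_pos.2 h)] with ε hε
    exact iff_of_true (by linarith [hε.2]) h
  · filter_upwards [self_mem_nhdsWithin] with ε (hε : 0 < ε)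
    exact iff_of_false (by linarith) h.not_gt

variable {r : ℕ} {c : ℕ → Fin n → ℝ} {t : ℕ → ℝ}

theorem eventually_chain_le_shift_iff (hn : 0 < n) (hm : SLt 0 m)
    (hct : ∀ l ∈ Icc 1 r, c l = u₀ + t l • m) (ht : StrictMonoOn t (Icc 1 r)) {i : ℕ}
    (hi : i ∈ Icc 1 r) :
    ∀ᶠ ε in 𝓝[>] (0 : ℝ), ∀ l ∈ Icc 1 r,
      (c l ≤ c i + ε • m ↔ l ≤ i) ∧ (c l ≤ c i - ε • m ↔ l ≤ i - 1) := by
  refine (eventually_all_finite (finite_Icc 1 r)).2 fun l hl => ?_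
  filter_upwards [eventually_le_add_iff_le (t l) (t i), eventually_le_sub_iff_lt (t l) (t i)]
    with ε hadd hsub
  rw [hct l hl, hct i hi, add_smul_add_smul, add_smul_sub_smul, add_smul_le_add_smul_iff hn hm,
    add_smul_le_add_smul_iff hn hm, hadd, hsub, ht.le_iff_le hl hi, ht.lt_iff_lt hl hi,
    Nat.lt_iff_le_pred hi.1]
  exact ⟨Iff.rfl, Iff.rfl⟩

theorem eventually_chain_le_add_iff_le_sub (hn : 0 < n) (hm : SLt 0 m)
    (hct : ∀ l ∈ Icc 1 r, c l = u₀ + t l • m) {a : ℝ} (ha : ∀ l ∈ Icc 1 r, t l ≠ a) :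
    ∀ᶠ ε in 𝓝[>] (0 : ℝ), ∀ l ∈ Icc 1 r,
      (c l ≤ u₀ + a • m + ε • m ↔ c l ≤ u₀ + a • m - ε • m) := by
  refine (eventually_all_finite (finite_Icc 1 r)).2 fun l hl => ?_
  filter_upwards [eventually_le_add_iff_le (t l) a, eventually_le_sub_iff_lt (t l) a]
    with ε hadd hsub
  rw [hct l hl, add_smul_add_smul, add_smul_sub_smul, add_smul_le_add_smul_iff hn hm,
    add_smul_le_add_smul_iff hn hm, hadd, hsub]
  exact (ha l hl).le_iff_lt

end Line

section PushLine

open Set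

variable {n : ℕ} {𝕜 : Type} [Field 𝕜] {M : PersistenceModule n 𝕜} {Cbar : Finset (Fin n → ℝ)}
  {L : Set (Fin n → ℝ)} {pushL : (Fin n → ℝ) → (Fin n → ℝ)} {r : ℕ} {c : ℕ → Fin n → ℝ}

theorem exists_isGreatest_lowerSet (hclosed : ∀ a ∈ Cbar, ∀ b ∈ Cbar, a ⊔ b ∈ Cbar)
    {u : Fin n → ℝ} (h : ∃ x ∈ Cbar, x ≤ u) : ∃ g, IsGreatest {x | x ∈ Cbar ∧ x ≤ u} g := by
  classical
  have hne : (Cbar.filter (· ≤ u)).Nonempty := by simpa [Finset.filter_nonempty_iff] using h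
  refine ⟨(Cbar.filter (· ≤ u)).sup' hne id, ?_, fun x hx => ?_⟩
  · have hsup : SupClosed {x | x ∈ Cbar ∧ x ≤ u} := fun x hx y hy =>
      ⟨hclosed x hx.1 y hy.1, sup_le hx.2 hy.2⟩
    exact hsup.finsetSup'_mem hne fun x hx => Finset.mem_filter.1 hx
  · exact Finset.le_sup' id (Finset.mem_filter.2 ⟨hx.1, hx.2⟩)

theorem HypStar.rho_eq_of_lowerSet_eq (hstar : HypStar M Cbar)
    (hclosed : ∀ a ∈ Cbar, ∀ b ∈ Cbar, a ⊔ b ∈ Cbar) {u v u' v' : Fin n → ℝ} (huv : u ≤ v)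
    (huv' : u' ≤ v') (hu : {x | x ∈ Cbar ∧ x ≤ u} = {x | x ∈ Cbar ∧ x ≤ u'})
    (hv : {x | x ∈ Cbar ∧ x ≤ v} = {x | x ∈ Cbar ∧ x ≤ v'}) :
    rho M u v = rho M u' v' := by
  have hex : (∃ x ∈ Cbar, x ≤ u) ↔ ∃ x ∈ Cbar, x ≤ u' :=
    exists_congr fun x => Set.ext_iff.1 hu x
  by_cases h : ∃ x ∈ Cbar, x ≤ u
  · obtain ⟨x, hx, hxu⟩ := h
    obtain ⟨g, hg⟩ := exists_isGreatest_lowerSet hclosed ⟨x, hx, hxu⟩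
    obtain ⟨g', hg'⟩ := exists_isGreatest_lowerSet hclosed ⟨x, hx, hxu.trans huv⟩
    rw [(hstar u v huv).1 ⟨x, hx, hxu⟩ g g' hg hg',
      (hstar u' v' huv').1 (hex.1 ⟨x, hx, hxu⟩) g g' (hu ▸ hg) (hv ▸ hg')]
  · rw [(hstar u v huv).2 h, (hstar u' v' huv').2 (hex.not.1 h)]

theorem le_iff_pushL_le (hpush : ∀ w, IsLeast {x | x ∈ L ∧ w ≤ x} (pushL w))
    {x w : Fin n → ℝ} (hw : w ∈ L) : x ≤ w ↔ pushL x ≤ w :=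
  ⟨fun h => (hpush x).2 ⟨hw, h⟩, fun h => (hpush x).1.2.trans h⟩

theorem exists_pushL_eq
    (hcimg : pushL '' (↑Cbar : Set (Fin n → ℝ)) = {x | ∃ i : ℕ, 1 ≤ i ∧ i ≤ r ∧ x = c i})
    {x : Fin n → ℝ} (hx : x ∈ Cbar) : ∃ l ∈ Icc 1 r, pushL x = c l := by
  obtain ⟨l, hl₁, hl₂, hl⟩ : pushL x ∈ {x | ∃ i : ℕ, 1 ≤ i ∧ i ≤ r ∧ x = c i} :=
    hcimg ▸ mem_image_of_mem pushL hx
  exact ⟨l, ⟨hl₁, hl₂⟩, hl⟩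

theorem chain_mem (hpush : ∀ w, IsLeast {x | x ∈ L ∧ w ≤ x} (pushL w))
    (hcimg : pushL '' (↑Cbar : Set (Fin n → ℝ)) = {x | ∃ i : ℕ, 1 ≤ i ∧ i ≤ r ∧ x = c i})
    {l : ℕ} (hl : l ∈ Icc 1 r) : c l ∈ L := by
  obtain ⟨x, -, hx⟩ : c l ∈ pushL '' (↑Cbar : Set (Fin n → ℝ)) := hcimg ▸ ⟨l, hl.1, hl.2, rfl⟩
  exact hx ▸ (hpush x).1.1

theorem lowerSet_eq_of_chain_le_iff (hpush : ∀ w, IsLeast {x | x ∈ L ∧ w ≤ x} (pushL w))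
    (hcimg : pushL '' (↑Cbar : Set (Fin n → ℝ)) = {x | ∃ i : ℕ, 1 ≤ i ∧ i ≤ r ∧ x = c i})
    {w w' : Fin n → ℝ} (hw : w ∈ L) (hw' : w' ∈ L) (h : ∀ l ∈ Icc 1 r, c l ≤ w ↔ c l ≤ w') :
    {x | x ∈ Cbar ∧ x ≤ w} = {x | x ∈ Cbar ∧ x ≤ w'} := by
  ext x
  refine and_congr_right fun hx => ?_
  obtain ⟨l, hl, hpl⟩ := exists_pushL_eq hcimg hx
  rw [le_iff_pushL_le hpush hw, le_iff_pushL_le hpush hw', hpl]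
  exact h l hl

theorem not_exists_le_of_chain_not_le (hpush : ∀ w, IsLeast {x | x ∈ L ∧ w ≤ x} (pushL w))
    (hcimg : pushL '' (↑Cbar : Set (Fin n → ℝ)) = {x | ∃ i : ℕ, 1 ≤ i ∧ i ≤ r ∧ x = c i})
    {w : Fin n → ℝ} (hw : w ∈ L) (h : ∀ l ∈ Icc 1 r, ¬ c l ≤ w) : ¬ ∃ x ∈ Cbar, x ≤ w := by
  rintro ⟨x, hx, hxw⟩
  obtain ⟨l, hl, hpl⟩ := exists_pushL_eq hcimg hx
  exact h l hl (hpl ▸ (le_iff_pushL_le hpush hw).1 hxw)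

theorem HypStar.rho_eq_rhoz (hstar : HypStar M Cbar)
    (hclosed : ∀ a ∈ Cbar, ∀ b ∈ Cbar, a ⊔ b ∈ Cbar)
    (hpush : ∀ w, IsLeast {x | x ∈ L ∧ w ≤ x} (pushL w))
    (hcimg : pushL '' (↑Cbar : Set (Fin n → ℝ)) = {x | ∃ i : ℕ, 1 ≤ i ∧ i ≤ r ∧ x = c i})
    (hc : MonotoneOn c (Icc 1 r)) ⦃w w' : Fin n → ℝ⦄ (hw : w ∈ L) (hw' : w' ∈ L)
    (hww' : w ≤ w') ⦃i i' : ℕ⦄ (hi : i ≤ r) (hi' : i' ≤ r)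
    (h : ∀ l ∈ Icc 1 r, c l ≤ w ↔ l ≤ i) (h' : ∀ l ∈ Icc 1 r, c l ≤ w' ↔ l ≤ i') :
    (rho M w w' : ℤ) = rhoz M c i i' := by
  obtain rfl | hi₀ := Nat.eq_zero_or_pos i
  · have hempty := not_exists_le_of_chain_not_le hpush hcimg hw fun l hl hlw => by
      have := (h l hl).1 hlw
      have := hl.1
      omega
    rw [rhoz, if_pos (Or.inl rfl), (hstar w w' hww').2 hempty, Nat.cast_zero]
  have hiL : i ∈ Icc 1 r := ⟨hi₀, hi⟩
  have hii' : i ≤ i' := (h' i hiL).1 (((h i hiL).2 le_rfl).trans hww')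
  have hi'L : i' ∈ Icc 1 r := ⟨hi₀.trans_le hii', hi'⟩
  have lowerSet_eq : ∀ k z, k ∈ Icc 1 r → z ∈ L → (∀ l ∈ Icc 1 r, c l ≤ z ↔ l ≤ k) →
      {x | x ∈ Cbar ∧ x ≤ z} = {x | x ∈ Cbar ∧ x ≤ c k} := fun k z hk hz hzk =>
    lowerSet_eq_of_chain_le_iff hpush hcimg hz (chain_mem hpush hcimg hk) fun l hl =>
      ⟨fun hlz => hc hl hk ((hzk l hl).1 hlz), fun hlk => hlk.trans ((hzk k hk).2 le_rfl)⟩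
  rw [rhoz, if_neg (by omega), hstar.rho_eq_of_lowerSet_eq hclosed hww' (hc hiL hi'L hii')
    (lowerSet_eq i w hiL hw h) (lowerSet_eq i' w' hi'L hw' h')]

end PushLine

section Parts

open Set

variable {n : ℕ} {𝕜 : Type} [Field 𝕜] {M : PersistenceModule n 𝕜} {Cbar : Finset (Fin n → ℝ)}
  {u₀ m : Fin n → ℝ} {L : Set (Fin n → ℝ)} {pushL : (Fin n → ℝ) → (Fin n → ℝ)} {r : ℕ}
  {c : ℕ → Fin n → ℝ} {t : ℕ → ℝ}

theorem HypStar.eventually_boxRank_chain_eq (hstar : HypStar M Cbar)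
    (hclosed : ∀ a ∈ Cbar, ∀ b ∈ Cbar, a ⊔ b ∈ Cbar) (hn : 0 < n) (hm : SLt 0 m)
    (hL : L = {x | ∃ s : ℝ, x = u₀ + s • m})
    (hpush : ∀ w, IsLeast {x | x ∈ L ∧ w ≤ x} (pushL w))
    (hcimg : pushL '' (↑Cbar : Set (Fin n → ℝ)) = {x | ∃ i : ℕ, 1 ≤ i ∧ i ≤ r ∧ x = c i})
    (hct : ∀ l ∈ Icc 1 r, c l = u₀ + t l • m) (ht : StrictMonoOn t (Icc 1 r))
    {i j : ℕ} (hi : 1 ≤ i) (hij : i < j) (hj : j ≤ r) :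
    ∀ᶠ ε in 𝓝[>] (0 : ℝ), SLt (c i + ε • m) (c j - ε • m) →
      boxRank M (c i - ε • m) (c i + ε • m) (c j - ε • m) (c j + ε • m) =
        rhoz M c i (j - 1) - rhoz M c (i - 1) (j - 1) - rhoz M c i j + rhoz M c (i - 1) j := by
  have hiL : i ∈ Icc 1 r := ⟨hi, by omega⟩
  have hjL : j ∈ Icc 1 r := ⟨by omega, hj⟩
  have hc : MonotoneOn c (Icc 1 r) := fun a ha b hb hab => by
    rw [hct a ha, hct b hb, add_smul_le_add_smul_iff hn hm]
    exact ht.monotoneOn ha hb hab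
  have hrho := hstar.rho_eq_rhoz hclosed hpush hcimg hc
  have hmem := add_smul_mem_line hL
  filter_upwards [eventually_chain_le_shift_iff hn hm hct ht hiL,
    eventually_chain_le_shift_iff hn hm hct ht hjL, self_mem_nhdsWithin]
    with ε hεi hεj (hε : 0 < ε) hslt
  have hi_mem := hmem (chain_mem hpush hcimg hiL) ε
  have hj_mem := hmem (chain_mem hpush hcimg hjL) ε
  have hi_le := sub_smul_le_add_smul (u := c i) hm.le hε.le
  have hj_le := sub_smul_le_add_smul (u := c j) hm.le hε.le
  unfold boxRank
  rw [hrho hi_mem.1 hj_mem.2 hslt.le hiL.2 (by omega) (fun l hl => (hεi l hl).1)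
      (fun l hl => (hεj l hl).2),
    hrho hi_mem.2 hj_mem.2 (hi_le.trans hslt.le) (by omega) (by omega)
      (fun l hl => (hεi l hl).2) (fun l hl => (hεj l hl).2),
    hrho hi_mem.1 hj_mem.1 (hslt.le.trans hj_le) hiL.2 hj (fun l hl => (hεi l hl).1)
      (fun l hl => (hεj l hl).1),
    hrho hi_mem.2 hj_mem.1 (hi_le.trans (hslt.le.trans hj_le)) (by omega) hj
      (fun l hl => (hεi l hl).2) (fun l hl => (hεj l hl).1)]

theorem eventually_lowerSet_add_smul_eq_sub_smul (hn : 0 < n) (hm : SLt 0 m)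
    (hL : L = {x | ∃ s : ℝ, x = u₀ + s • m})
    (hpush : ∀ w, IsLeast {x | x ∈ L ∧ w ≤ x} (pushL w))
    (hcimg : pushL '' (↑Cbar : Set (Fin n → ℝ)) = {x | ∃ i : ℕ, 1 ≤ i ∧ i ≤ r ∧ x = c i})
    (hct : ∀ l ∈ Icc 1 r, c l = u₀ + t l • m) ⦃w : Fin n → ℝ⦄ (hw : w ∈ L)
    (hw' : w ∉ pushL '' (↑Cbar : Set (Fin n → ℝ))) :
    ∀ᶠ ε in 𝓝[>] (0 : ℝ),
      {x | x ∈ Cbar ∧ x ≤ w + ε • m} = {x | x ∈ Cbar ∧ x ≤ w - ε • m} := by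
  have hmem := add_smul_mem_line hL hw
  obtain ⟨a, rfl⟩ : ∃ a : ℝ, w = u₀ + a • m := by rwa [hL] at hw
  have ha : ∀ l ∈ Icc 1 r, t l ≠ a := fun l hl hla =>
    hw' (hcimg ▸ ⟨l, hl.1, hl.2, by rw [hct l hl, hla]⟩)
  filter_upwards [eventually_chain_le_add_iff_le_sub hn hm hct ha] with ε hε
  exact lowerSet_eq_of_chain_le_iff hpush hcimg (hmem ε).1 (hmem ε).2 hε

theorem HypStar.eventually_boxRank_eq_zero (hstar : HypStar M Cbar)
    (hclosed : ∀ a ∈ Cbar, ∀ b ∈ Cbar, a ⊔ b ∈ Cbar) (hn : 0 < n) (hm : SLt 0 m)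
    (hL : L = {x | ∃ s : ℝ, x = u₀ + s • m})
    (hpush : ∀ w, IsLeast {x | x ∈ L ∧ w ≤ x} (pushL w))
    (hcimg : pushL '' (↑Cbar : Set (Fin n → ℝ)) = {x | ∃ i : ℕ, 1 ≤ i ∧ i ≤ r ∧ x = c i})
    (hct : ∀ l ∈ Icc 1 r, c l = u₀ + t l • m) {u v : Fin n → ℝ} (hu : u ∈ L) (hv : v ∈ L)
    (h : u ∉ pushL '' (↑Cbar : Set (Fin n → ℝ)) ∨ v ∉ pushL '' (↑Cbar : Set (Fin n → ℝ))) :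
    ∀ᶠ ε in 𝓝[>] (0 : ℝ), SLt (u + ε • m) (v - ε • m) →
      boxRank M (u - ε • m) (u + ε • m) (v - ε • m) (v + ε • m) = 0 := by
  have hlowerSet := eventually_lowerSet_add_smul_eq_sub_smul hn hm hL hpush hcimg hct
  filter_upwards [h.elim (fun hu' => (hlowerSet hu hu').mono fun ε h => Or.inl h)
    (fun hv' => (hlowerSet hv hv').mono fun ε h => Or.inr h), self_mem_nhdsWithin]
    with ε hε (hε₀ : 0 < ε) hslt
  have hu_le := sub_smul_le_add_smul (u := u) hm.le hε₀.le
  have hv_le := sub_smul_le_add_smul (u := v) hm.le hε₀.le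
  have h₁ := hu_le.trans hslt.le
  have h₂ := hslt.le.trans hv_le
  have h₃ := h₁.trans hv_le
  unfold boxRank
  rcases hε with hε | hε
  · rw [hstar.rho_eq_of_lowerSet_eq hclosed hslt.le h₁ hε rfl,
      hstar.rho_eq_of_lowerSet_eq hclosed h₂ h₃ hε rfl]
    ring
  · rw [hstar.rho_eq_of_lowerSet_eq hclosed h₂ hslt.le rfl hε,
      hstar.rho_eq_of_lowerSet_eq hclosed h₃ h₁ rfl hε]
    ring

end Parts

theorem stmt_17_general {n : ℕ} (hn : 0 < n) {𝕜 : Type} [Field 𝕜]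
    (M : PersistenceModule n 𝕜)
    (Cbar : Finset (Fin n → ℝ))
    (hclosed : ∀ a ∈ Cbar, ∀ b ∈ Cbar, a ⊔ b ∈ Cbar)
    (hstar : HypStar M Cbar)
    (u₀ m : Fin n → ℝ) (hm : SLt 0 m)
    (L : Set (Fin n → ℝ)) (hLdef : L = {x | ∃ t : ℝ, x = u₀ + t • m})
    (pushL : (Fin n → ℝ) → (Fin n → ℝ))
    (hpush : ∀ w : Fin n → ℝ, IsLeast {x | x ∈ L ∧ w ≤ x} (pushL w))
    (r : ℕ) (c : ℕ → (Fin n → ℝ))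
    (hcmono : ∀ i j : ℕ, 1 ≤ i → i < j → j ≤ r → SLt (c i) (c j))
    (hcimg : pushL '' (↑Cbar : Set (Fin n → ℝ)) =
      {x | ∃ i : ℕ, 1 ≤ i ∧ i ≤ r ∧ x = c i}) :
    (∀ i j : ℕ, 1 ≤ i → i < j → j ≤ r →
      ∃ ε₀ : ℝ, 0 < ε₀ ∧ ∀ ε : ℝ, 0 < ε → ε ≤ ε₀ →
        SLt (c i + ε • m) (c j - ε • m) →
        (rho M (c i + ε • m) (c j - ε • m) : ℤ)
            - (rho M (c i - ε • m) (c j - ε • m) : ℤ)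
            - (rho M (c i + ε • m) (c j + ε • m) : ℤ)
            + (rho M (c i - ε • m) (c j + ε • m) : ℤ)
          = rhoz M c i (j - 1) - rhoz M c (i - 1) (j - 1)
            - rhoz M c i j + rhoz M c (i - 1) j) ∧
    (∀ u v : Fin n → ℝ, u ∈ L → v ∈ L → SLt u v →
      (u ∉ pushL '' (↑Cbar : Set (Fin n → ℝ)) ∨
        v ∉ pushL '' (↑Cbar : Set (Fin n → ℝ))) →
      ∃ ε₀ : ℝ, 0 < ε₀ ∧ ∀ ε : ℝ, 0 < ε → ε ≤ ε₀ →
        SLt (u + ε • m) (v - ε • m) →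
        (rho M (u + ε • m) (v - ε • m) : ℤ)
            - (rho M (u - ε • m) (v - ε • m) : ℤ)
            - (rho M (u + ε • m) (v + ε • m) : ℤ)
            + (rho M (u - ε • m) (v + ε • m) : ℤ) = 0) ∧
    (∀ u v : Fin n → ℝ, u ∈ L → v ∈ L → SLt u v → mu M u v ≠ 0 →
      u ∈ pushL '' (↑Cbar : Set (Fin n → ℝ)) ∧
        v ∈ pushL '' (↑Cbar : Set (Fin n → ℝ))) ∧
    (∀ i j : ℕ, 1 ≤ i → i < j → j ≤ r →
      mu M (c i) (c j) = rhoz M c i (j - 1) - rhoz M c (i - 1) (j - 1)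
        - rhoz M c i j + rhoz M c (i - 1) j) := by
  have hcL : ∀ l ∈ Set.Icc 1 r, ∃ s : ℝ, c l = u₀ + s • m := fun l hl => by
    have := chain_mem hpush hcimg hl
    rwa [hLdef] at this
  choose! t hct using hcL
  have ht : StrictMonoOn t (Set.Icc 1 r) := fun i hi j hj hij => by
    have h := hcmono i j hi.1 hij hj.2
    rw [hct i hi, hct j hj] at h
    exact lt_of_add_smul_slt_add_smul hn hm h
  have partA := fun i j (hi : 1 ≤ i) (hij : i < j) (hj : j ≤ r) =>
    hstar.eventually_boxRank_chain_eq hclosed hn hm hLdef hpush hcimg hct ht hi hij hj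
  have partB := fun u v (hu : u ∈ L) (hv : v ∈ L) =>
    hstar.eventually_boxRank_eq_zero hclosed hn hm hLdef hpush hcimg hct hu hv
  refine ⟨fun i j hi hij hj => exists_forall_of_eventually_nhdsGT (partA i j hi hij hj),
    fun u v hu hv _ h => exists_forall_of_eventually_nhdsGT (partB u v hu hv h),
    fun u v hu hv huv hμ => ?_,
    fun i j hi hij hj => mu_eq_of_eventually_boxRank_eq M hm (hcmono i j hi hij hj)
      (partA i j hi hij hj)⟩
  by_contra h
  exact hμ (mu_eq_of_eventually_boxRank_eq M hm huv (partB u v hu hv (not_and_or.1 h)))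

/-- let `𝕍` satisfy hypothesis (⋆) w.r.t. `C̄`, `L` the line
`{u₀ + t·m}` with `0 ≺ m`, and `push_L(C̄) = {c¹ ≺ … ≺ c^r}`. Writing
`Δ_ε(u,v) = ρ(u+εm,v−εm) − ρ(u−εm,v−εm) − ρ(u+εm,v+εm) + ρ(u−εm,v+εm)`:
(a) if `u = cⁱ`, `v = cʲ` with `i < j`, then for all small enough `ε > 0`,
`Δ_ε(u,v) = ρ(cⁱ,c^{j−1}) − ρ(c^{i−1},c^{j−1}) − ρ(cⁱ,cʲ) + ρ(c^{i−1},cʲ)`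
(terms involving `c⁰` being `0`);
(b) if `u ∉ push_L(C̄)` or `v ∉ push_L(C̄)`, then `Δ_ε(u,v) = 0` for all small
enough `ε > 0`.
Consequently, for `u ≺ v` on `L` the multiplicity `μ_𝕍(u,v)` can be nonzero
only when both `u` and `v` belong to `push_L(C̄)`, and then it is given by the
formula in (a). -/
theorem stmt_17 {n : ℕ} (hn : 0 < n) {𝕜 : Type} [Field 𝕜]
    (M : PersistenceModule n 𝕜)
    (Cbar : Finset (Fin n → ℝ)) (hCne : Cbar.Nonempty)
    (hclosed : ∀ a ∈ Cbar, ∀ b ∈ Cbar, a ⊔ b ∈ Cbar)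
    (hstar : HypStar M Cbar)
    (u₀ m : Fin n → ℝ) (hm : SLt 0 m)
    (L : Set (Fin n → ℝ)) (hLdef : L = {x | ∃ t : ℝ, x = u₀ + t • m})
    (pushL : (Fin n → ℝ) → (Fin n → ℝ))
    (hpush : ∀ w : Fin n → ℝ, IsLeast {x | x ∈ L ∧ w ≤ x} (pushL w))
    (r : ℕ) (hr : 1 ≤ r) (c : ℕ → (Fin n → ℝ))
    (hcmono : ∀ i j : ℕ, 1 ≤ i → i < j → j ≤ r → SLt (c i) (c j))
    (hcimg : pushL '' (↑Cbar : Set (Fin n → ℝ)) =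
      {x | ∃ i : ℕ, 1 ≤ i ∧ i ≤ r ∧ x = c i}) :
    (∀ i j : ℕ, 1 ≤ i → i < j → j ≤ r →
      ∃ ε₀ : ℝ, 0 < ε₀ ∧ ∀ ε : ℝ, 0 < ε → ε ≤ ε₀ →
        SLt (c i + ε • m) (c j - ε • m) →
        (rho M (c i + ε • m) (c j - ε • m) : ℤ)
            - (rho M (c i - ε • m) (c j - ε • m) : ℤ)
            - (rho M (c i + ε • m) (c j + ε • m) : ℤ)
            + (rho M (c i - ε • m) (c j + ε • m) : ℤ)
          = rhoz M c i (j - 1) - rhoz M c (i - 1) (j - 1)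
            - rhoz M c i j + rhoz M c (i - 1) j) ∧
    (∀ u v : Fin n → ℝ, u ∈ L → v ∈ L → SLt u v →
      (u ∉ pushL '' (↑Cbar : Set (Fin n → ℝ)) ∨
        v ∉ pushL '' (↑Cbar : Set (Fin n → ℝ))) →
      ∃ ε₀ : ℝ, 0 < ε₀ ∧ ∀ ε : ℝ, 0 < ε → ε ≤ ε₀ →
        SLt (u + ε • m) (v - ε • m) →
        (rho M (u + ε • m) (v - ε • m) : ℤ)
            - (rho M (u - ε • m) (v - ε • m) : ℤ)
            - (rho M (u + ε • m) (v + ε • m) : ℤ)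
            + (rho M (u - ε • m) (v + ε • m) : ℤ) = 0) ∧
    (∀ u v : Fin n → ℝ, u ∈ L → v ∈ L → SLt u v → mu M u v ≠ 0 →
      u ∈ pushL '' (↑Cbar : Set (Fin n → ℝ)) ∧
        v ∈ pushL '' (↑Cbar : Set (Fin n → ℝ))) ∧
    (∀ i j : ℕ, 1 ≤ i → i < j → j ≤ r →
      mu M (c i) (c j) = rhoz M c i (j - 1) - rhoz M c (i - 1) (j - 1)
        - rhoz M c i j + rhoz M c (i - 1) j) :=
  stmt_17_general hn M Cbar hclosed hstar u₀ m hm L hLdef pushL hpush r c hcmono hcimg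
end
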